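/- arXiv:2508.18890 — 8 statements merged into one kernel-verified Lean document; each statement's English description precedes it below -/
import Mathlib

section
/- For every integer n ≥ 5, the sum over ℓ from 1 to n-1 of A(n-1, ℓ-1)/(n-1)! times ℓ(n-2ℓ)(n² - 4nℓ + 4ℓ² - n) equals n/15, where A(m,k) denotes the Eulerian numbers. -/
open Finset

/-- The Eulerian number `A(m, k)`: the number of permutations of `{1,…,m}` with
exactly `k` ascents, where `σ` has an ascent at position `i` if `σ(i) < σ(i+1)`. -/
def eulerianNumber (m k : ℕ) : ℕ :=
  (Finset.univ.filter (fun σ : Equiv.Perm (Fin m) =>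
    (Finset.univ.filter (fun i : Fin m =>
      if h : (i : ℕ) + 1 < m then σ i < σ ⟨(i : ℕ) + 1, h⟩ else False)).card = k)).card

namespace EulerAux

/-- ascent predicate -/
def ap {M : ℕ} (σ : Equiv.Perm (Fin M)) (i : Fin M) : Prop :=
  if h : (i : ℕ) + 1 < M then σ i < σ ⟨(i : ℕ) + 1, h⟩ else False

instance {M : ℕ} (σ : Equiv.Perm (Fin M)) (i : Fin M) : Decidable (ap σ i) := by
  unfold ap; infer_instance

/-- ascent count -/
def asc {M : ℕ} (σ : Equiv.Perm (Fin M)) : ℕ := (Finset.univ.filter (ap σ)).card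

lemma eulerianNumber_eq (m k : ℕ) :
    eulerianNumber m k = (Finset.univ.filter (fun σ : Equiv.Perm (Fin m) => asc σ = k)).card := by
  unfold eulerianNumber asc ap
  convert rfl using 2

lemma asc_le {M : ℕ} (σ : Equiv.Perm (Fin M)) : asc σ ≤ M := by
  classical
  exact (Finset.card_filter_le _ _).trans (by simp)

def insertMax {m : ℕ} (σ : Equiv.Perm (Fin m)) (p : Fin (m + 1)) : Equiv.Perm (Fin (m + 1)) :=
  (finSuccEquiv' p).trans (σ.optionCongr.trans (finSuccEquiv' (Fin.last m)).symm)

@[simp] lemma insertMax_apply_self {m : ℕ} (σ : Equiv.Perm (Fin m)) (p : Fin (m + 1)) :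
    insertMax σ p p = Fin.last m := by
  simp [insertMax, finSuccEquiv'_at]

@[simp] lemma insertMax_apply_succAbove {m : ℕ} (σ : Equiv.Perm (Fin m)) (p : Fin (m + 1))
    (j : Fin m) : insertMax σ p (p.succAbove j) = Fin.castSucc (σ j) := by
  simp [insertMax, finSuccEquiv'_succAbove, finSuccEquiv'_symm_some,
    Fin.succAbove_last]

lemma insertMax_injective {m : ℕ} :
    Function.Injective (fun sp : Equiv.Perm (Fin m) × Fin (m + 1) => insertMax sp.1 sp.2) := by
  rintro ⟨σ, p⟩ ⟨σ', p'⟩ h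
  simp only at h
  have hp : p = p' := by
    by_contra hne
    obtain ⟨j, hj⟩ := Fin.exists_succAbove_eq hne
    have h1 : insertMax σ p p = Fin.last m := insertMax_apply_self σ p
    have h2 : insertMax σ' p' p = Fin.castSucc (σ' j) := by
      have := insertMax_apply_succAbove σ' p' j
      rwa [hj] at this
    rw [h] at h1
    rw [h1] at h2
    exact absurd h2.symm (Fin.castSucc_lt_last (σ' j)).ne
  subst hp
  have hσ : σ = σ' := by
    ext j
    have := congrArg (fun τ : Equiv.Perm (Fin (m+1)) => τ (p.succAbove j)) h
    have h2 : Fin.castSucc (σ j) = Fin.castSucc (σ' j) := by simpa using this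
    exact congrArg Fin.val (Fin.castSucc_inj.mp h2)
  simp [hσ]

lemma insertMax_bijective (m : ℕ) :
    Function.Bijective (fun sp : Equiv.Perm (Fin m) × Fin (m + 1) => insertMax sp.1 sp.2) := by
  rw [Fintype.bijective_iff_injective_and_card]
  refine ⟨insertMax_injective, ?_⟩
  simp [Fintype.card_perm, Nat.factorial_succ, mul_comm]

end EulerAux

namespace EulerAux

lemma ap_iff {M : ℕ} (σ : Equiv.Perm (Fin M)) (i : Fin M) (h : (i : ℕ) + 1 < M) :
    ap σ i ↔ σ i < σ ⟨(i : ℕ) + 1, h⟩ := by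
  unfold ap; rw [dif_pos h]

lemma not_ap {M : ℕ} (σ : Equiv.Perm (Fin M)) (i : Fin M) (h : ¬ ((i : ℕ) + 1 < M)) :
    ¬ ap σ i := by
  unfold ap; rw [dif_neg h]; exact not_false

lemma not_ap_insertMax_self {m : ℕ} (σ : Equiv.Perm (Fin m)) (p : Fin (m + 1)) :
    ¬ ap (insertMax σ p) p := by
  by_cases h : (p : ℕ) + 1 < m + 1
  · rw [ap_iff _ _ h, insertMax_apply_self]
    exact (Fin.le_last _).not_gt
  · exact not_ap _ _ h

lemma ap_insertMax_succAbove {m : ℕ} (σ : Equiv.Perm (Fin m)) (p : Fin (m + 1)) (j : Fin m) :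
    ap (insertMax σ p) (p.succAbove j) ↔
      ((j : ℕ) + 1 = (p : ℕ) ∨ ((j : ℕ) + 1 ≠ (p : ℕ) ∧ ap σ j)) := by
  have hjm : (j : ℕ) < m := j.isLt
  have hpm : (p : ℕ) ≤ m := Nat.lt_succ_iff.mp p.isLt
  rcases Nat.lt_trichotomy ((j : ℕ) + 1) (p : ℕ) with hlt | heq | hgt
  · -- j + 1 < p : ascent iff ascent of σ at j
    have hc : Fin.castSucc j < p := by rw [Fin.lt_def]; simpa using by omega
    have hi : p.succAbove j = Fin.castSucc j := Fin.succAbove_of_castSucc_lt p j hc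
    have hj1 : (j : ℕ) + 1 < m := by omega
    set j' : Fin m := ⟨(j : ℕ) + 1, hj1⟩ with hj'
    have hcond : ((p.succAbove j : ℕ)) + 1 < m + 1 := by rw [hi]; simpa using by omega
    rw [ap_iff _ _ hcond]
    have e1 : insertMax σ p (p.succAbove j) = Fin.castSucc (σ j) := insertMax_apply_succAbove σ p j
    have e2 : (⟨((p.succAbove j : ℕ)) + 1, hcond⟩ : Fin (m + 1)) = p.succAbove j' := by
      have : p.succAbove j' = Fin.castSucc j' := by
        apply Fin.succAbove_of_castSucc_lt
        rw [Fin.lt_def]; simpa using by omega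
      rw [this]
      apply Fin.ext; simp [hi, hj']
    rw [e1, e2, insertMax_apply_succAbove, Fin.castSucc_lt_castSucc_iff,
      ← ap_iff σ j (by simpa using hj1)]
    constructor
    · intro h; exact Or.inr ⟨by omega, h⟩
    · rintro (h | ⟨-, h⟩); · omega
      · exact h
  · -- j + 1 = p : always an ascent
    have hc : Fin.castSucc j < p := by rw [Fin.lt_def]; simpa using by omega
    have hi : p.succAbove j = Fin.castSucc j := Fin.succAbove_of_castSucc_lt p j hc
    have hcond : ((p.succAbove j : ℕ)) + 1 < m + 1 := by rw [hi]; simpa using by omega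
    rw [ap_iff _ _ hcond]
    have e2 : (⟨((p.succAbove j : ℕ)) + 1, hcond⟩ : Fin (m + 1)) = p := by
      apply Fin.ext; simp [hi]; omega
    rw [insertMax_apply_succAbove, e2, insertMax_apply_self]
    simp only [Fin.castSucc_lt_last, true_iff]
    exact Or.inl heq
  · -- p ≤ j
    have hle : p ≤ Fin.castSucc j := by rw [Fin.le_def]; simpa using by omega
    have hi : p.succAbove j = j.succ := Fin.succAbove_of_le_castSucc p j hle
    by_cases hj1 : (j : ℕ) + 1 < m
    · set j' : Fin m := ⟨(j : ℕ) + 1, hj1⟩ with hj'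
      have hcond : ((p.succAbove j : ℕ)) + 1 < m + 1 := by rw [hi]; simpa using by omega
      rw [ap_iff _ _ hcond]
      have e2 : (⟨((p.succAbove j : ℕ)) + 1, hcond⟩ : Fin (m + 1)) = p.succAbove j' := by
        have : p.succAbove j' = j'.succ := by
          apply Fin.succAbove_of_le_castSucc
          rw [Fin.le_def]; show (p : ℕ) ≤ (j : ℕ) + 1; omega
        rw [this]
        apply Fin.ext; simp [hi, hj']
      rw [insertMax_apply_succAbove, e2, insertMax_apply_succAbove,
        Fin.castSucc_lt_castSucc_iff, ← ap_iff σ j (by simpa using hj1)]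
      constructor
      · intro h; exact Or.inr ⟨by omega, h⟩
      · rintro (h | ⟨-, h⟩); · omega
        · exact h
    · have hcond : ¬ (((p.succAbove j : ℕ)) + 1 < m + 1) := by rw [hi]; simpa using by omega
      constructor
      · intro h; exact absurd h (not_ap _ _ hcond)
      · rintro (h | ⟨-, h⟩); · omega
        · exact absurd h (not_ap σ j (by simpa using hj1))

end EulerAux

namespace EulerAux

lemma asc_eq_sum {M : ℕ} (σ : Equiv.Perm (Fin M)) :
    asc σ = ∑ i : Fin M, if ap σ i then 1 else 0 := Finset.card_filter _ _

lemma asc_insertMax {m : ℕ} (σ : Equiv.Perm (Fin m)) (p : Fin (m + 1)) :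
    asc (insertMax σ p) =
      ∑ j : Fin m, (if (j : ℕ) + 1 = (p : ℕ) then 1 else if ap σ j then 1 else 0) := by
  rw [asc_eq_sum, Fin.sum_univ_succAbove _ p, if_neg (not_ap_insertMax_self σ p), zero_add]
  apply Finset.sum_congr rfl
  intro j _
  by_cases h : (j : ℕ) + 1 = (p : ℕ)
  · rw [if_pos h, if_pos ((ap_insertMax_succAbove σ p j).mpr (Or.inl h))]
  · rw [if_neg h]
    by_cases h2 : ap σ j
    · rw [if_pos h2, if_pos ((ap_insertMax_succAbove σ p j).mpr (Or.inr ⟨h, h2⟩))]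
    · rw [if_neg h2, if_neg]
      rw [ap_insertMax_succAbove]
      rintro (hc | ⟨-, hc⟩)
      · exact h hc
      · exact h2 hc

lemma asc_insertMax_zero {m : ℕ} (σ : Equiv.Perm (Fin m)) :
    asc (insertMax σ 0) = asc σ := by
  rw [asc_insertMax, asc_eq_sum]
  apply Finset.sum_congr rfl
  intro j _
  rw [if_neg]
  simp

lemma asc_insertMax_succ {m : ℕ} (σ : Equiv.Perm (Fin m)) (q : Fin m) :
    asc (insertMax σ q.succ) = if ap σ q then asc σ else asc σ + 1 := by
  rw [asc_insertMax]
  have h1 : ∀ j : Fin m, (if (j : ℕ) + 1 = ((q.succ : Fin (m + 1)) : ℕ) then (1 : ℕ)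
      else if ap σ j then 1 else 0) = (if j = q then 1 else if ap σ j then 1 else 0) := by
    intro j
    by_cases h : j = q
    · subst h; rw [if_pos rfl, if_pos]; simp
    · rw [if_neg h, if_neg]
      simp only [Fin.val_succ]
      intro hc
      exact h (Fin.ext (by omega))
  rw [Finset.sum_congr rfl (fun j _ => h1 j)]
  rw [← Finset.add_sum_erase _ _ (Finset.mem_univ q), if_pos rfl]
  have h2 : ∑ j ∈ univ.erase q, (if j = q then (1 : ℕ) else if ap σ j then 1 else 0)
      = ∑ j ∈ univ.erase q, (if ap σ j then 1 else 0) :=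
    Finset.sum_congr rfl (fun j hj => by rw [if_neg (Finset.ne_of_mem_erase hj)])
  rw [h2]
  have h3 : asc σ = (if ap σ q then 1 else 0) + ∑ j ∈ univ.erase q, (if ap σ j then 1 else 0) := by
    rw [asc_eq_sum]
    exact (Finset.add_sum_erase _ _ (Finset.mem_univ q)).symm
  by_cases h : ap σ q
  · rw [if_pos h, h3, if_pos h]
  · rw [if_neg h, h3, if_neg h]
    omega

end EulerAux

namespace EulerAux

lemma count_p {m : ℕ} (σ : Equiv.Perm (Fin m)) (K : ℕ) :
    ∑ p : Fin (m + 1), (if asc (insertMax σ p) = K then 1 else 0)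
      = (if asc σ = K then asc σ + 1 else 0) + (if asc σ + 1 = K then m - asc σ else 0) := by
  rw [Fin.sum_univ_succ]
  rw [asc_insertMax_zero]
  have h1 : ∀ q : Fin m, (if asc (insertMax σ q.succ) = K then (1 : ℕ) else 0)
      = (if ap σ q then (if asc σ = K then 1 else 0) else (if asc σ + 1 = K then 1 else 0)) := by
    intro q
    rw [asc_insertMax_succ]
    by_cases h : ap σ q
    · rw [if_pos h, if_pos h]
    · rw [if_neg h, if_neg h]
  rw [Finset.sum_congr rfl (fun q _ => h1 q), Finset.sum_ite, Finset.sum_const, Finset.sum_const]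
  have hcard : (univ.filter (fun q => ap σ q)).card = asc σ := rfl
  have hcard2 : (univ.filter (fun q => ¬ ap σ q)).card = m - asc σ := by
    have := Finset.card_filter_add_card_filter_not (s := (univ : Finset (Fin m)))
      (p := fun q => ap σ q)
    simp only [Finset.card_univ, Fintype.card_fin] at this
    omega
  rw [hcard, hcard2, smul_eq_mul, smul_eq_mul]
  have hle := asc_le σ
  split_ifs <;> omega

lemma euler_sum_form (m K : ℕ) :
    eulerianNumber (m + 1) K =
      ∑ σ : Equiv.Perm (Fin m),
        ((if asc σ = K then asc σ + 1 else 0) + (if asc σ + 1 = K then m - asc σ else 0)) := by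
  rw [eulerianNumber_eq, Finset.card_filter]
  rw [← Fintype.sum_bijective _ (insertMax_bijective m)
    (fun sp => if asc (insertMax sp.1 sp.2) = K then 1 else 0)
    (fun τ => if asc τ = K then 1 else 0) (fun sp => rfl)]
  rw [Fintype.sum_prod_type]
  exact Finset.sum_congr rfl (fun σ _ => count_p σ K)

lemma sum_ite_const_card {α : Type*} [Fintype α] [DecidableEq α] (P : α → Prop) [DecidablePred P]
    (c : ℕ) : ∑ x : α, (if P x then c else 0) = c * (univ.filter P).card := by
  rw [Finset.sum_ite, Finset.sum_const, Finset.sum_const, smul_eq_mul, smul_eq_mul]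
  ring

lemma eulerian_zero_succ (m : ℕ) : eulerianNumber (m + 1) 0 = eulerianNumber m 0 := by
  rw [euler_sum_form, eulerianNumber_eq, Finset.card_filter]
  apply Finset.sum_congr rfl
  intro σ _
  by_cases h : asc σ = 0
  · rw [if_pos h, if_pos h, if_neg (by omega), h]
  · rw [if_neg h, if_neg h, if_neg (by omega)]

lemma eulerian_recurrence (m k : ℕ) :
    eulerianNumber (m + 1) (k + 1) =
      (k + 2) * eulerianNumber m (k + 1) + (m - k) * eulerianNumber m k := by
  rw [euler_sum_form]
  have h1 : ∀ σ : Equiv.Perm (Fin m),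
      ((if asc σ = k + 1 then asc σ + 1 else 0) + (if asc σ + 1 = k + 1 then m - asc σ else 0))
      = (if asc σ = k + 1 then k + 2 else 0) + (if asc σ = k then m - k else 0) := by
    intro σ
    by_cases h : asc σ = k + 1
    · rw [if_pos h, if_pos h, h, if_neg (by omega), if_neg (by omega)]
    · rw [if_neg h, if_neg h]
      by_cases h2 : asc σ = k
      · rw [if_pos (by omega), if_pos h2, h2]
      · rw [if_neg (by omega), if_neg h2]
  rw [Finset.sum_congr rfl (fun σ _ => h1 σ), Finset.sum_add_distrib,
    sum_ite_const_card, sum_ite_const_card, eulerianNumber_eq, eulerianNumber_eq]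

end EulerAux

namespace EulerAux

lemma asc_perm_fin_zero (σ : Equiv.Perm (Fin 0)) : asc σ = 0 := by
  simp [asc]

lemma eulerian_zero_zero : eulerianNumber 0 0 = 1 := by
  rw [eulerianNumber_eq]
  rw [Finset.filter_true_of_mem (fun σ _ => asc_perm_fin_zero σ)]
  simp [Finset.card_univ]

lemma eulerian_zero_pos (j : ℕ) : eulerianNumber 0 (j + 1) = 0 := by
  rw [eulerianNumber_eq]
  rw [Finset.filter_false_of_mem (fun σ _ => by rw [asc_perm_fin_zero]; omega)]
  simp

lemma eulerian_of_ge : ∀ m k : ℕ, 1 ≤ m → m ≤ k → eulerianNumber m k = 0 := by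
  intro m
  induction m with
  | zero => omega
  | succ m ih =>
    intro k h1 hk
    obtain ⟨k', rfl⟩ : ∃ k', k = k' + 1 := ⟨k - 1, by omega⟩
    rw [eulerian_recurrence]
    rcases Nat.eq_zero_or_pos m with hm | hm
    · subst hm
      rw [eulerian_zero_pos]
      simp
    · rw [ih (k' + 1) hm (by omega), Nat.sub_eq_zero_of_le (by omega)]
      simp

lemma eulerian_zero (m : ℕ) : eulerianNumber m 0 = 1 := by
  induction m with
  | zero => exact eulerian_zero_zero
  | succ m ih => rw [eulerian_zero_succ, ih]

lemma E10 : eulerianNumber 1 0 = 1 := eulerian_zero 1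
lemma E21 : eulerianNumber 2 1 = 1 := by
  have := eulerian_recurrence 1 0
  rw [eulerian_of_ge 1 1 le_rfl le_rfl, eulerian_zero 1] at this
  norm_num at this ⊢
  omega
lemma E31 : eulerianNumber 3 1 = 4 := by
  have := eulerian_recurrence 2 0
  rw [E21, eulerian_zero 2] at this
  norm_num at this ⊢
  omega
lemma E32 : eulerianNumber 3 2 = 1 := by
  have := eulerian_recurrence 2 1
  rw [eulerian_of_ge 2 2 (by omega) le_rfl, E21] at this
  norm_num at this ⊢
  omega
lemma E41 : eulerianNumber 4 1 = 11 := by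
  have := eulerian_recurrence 3 0
  rw [E31, eulerian_zero 3] at this
  norm_num at this ⊢
  omega
lemma E42 : eulerianNumber 4 2 = 11 := by
  have := eulerian_recurrence 3 1
  rw [E32, E31] at this
  norm_num at this ⊢
  omega
lemma E43 : eulerianNumber 4 3 = 1 := by
  have := eulerian_recurrence 3 2
  rw [eulerian_of_ge 3 3 (by omega) le_rfl, E32] at this
  norm_num at this ⊢
  omega

end EulerAux

namespace EulerAux

lemma step_sum (m : ℕ) (hm : 1 ≤ m) (f : ℕ → ℚ) :
    ∑ K ∈ Finset.range (m + 1), (eulerianNumber (m + 1) K : ℚ) * f K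
      = ∑ k ∈ Finset.range m,
          (eulerianNumber m k : ℚ) * (((k : ℚ) + 1) * f k + ((m : ℚ) - (k : ℚ)) * f (k + 1)) := by
  rw [Finset.sum_range_succ']
  have h1 : ∀ k ∈ Finset.range m, (eulerianNumber (m + 1) (k + 1) : ℚ) * f (k + 1)
      = ((k : ℚ) + 2) * (eulerianNumber m (k + 1) : ℚ) * f (k + 1)
        + ((m : ℚ) - (k : ℚ)) * (eulerianNumber m k : ℚ) * f (k + 1) := by
    intro k hk
    rw [Finset.mem_range] at hk
    rw [eulerian_recurrence]
    push_cast [Nat.cast_sub hk.le]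
    ring
  rw [Finset.sum_congr rfl h1, Finset.sum_add_distrib]
  have h2 : ∑ k ∈ Finset.range m, ((k : ℚ) + 2) * (eulerianNumber m (k + 1) : ℚ) * f (k + 1)
      = ∑ k ∈ Finset.range m, ((k : ℚ) + 1) * (eulerianNumber m k : ℚ) * f k
        - (eulerianNumber m 0 : ℚ) * f 0 := by
    have h3 : ∑ K ∈ Finset.range (m + 1), ((K : ℚ) + 1) * (eulerianNumber m K : ℚ) * f K
        = ∑ k ∈ Finset.range m, ((k : ℚ) + 2) * (eulerianNumber m (k + 1) : ℚ) * f (k + 1)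
          + (eulerianNumber m 0 : ℚ) * f 0 := by
      rw [Finset.sum_range_succ']
      congr 1
      · apply Finset.sum_congr rfl
        intro k _
        push_cast
        ring
      · simp
    have h4 : ∑ K ∈ Finset.range (m + 1), ((K : ℚ) + 1) * (eulerianNumber m K : ℚ) * f K
        = ∑ k ∈ Finset.range m, ((k : ℚ) + 1) * (eulerianNumber m k : ℚ) * f k := by
      rw [Finset.sum_range_succ, eulerian_of_ge m m hm le_rfl]
      simp
    rw [h3] at h4
    linarith [h4]
  rw [h2, eulerian_zero_succ]
  have h5 : ∑ k ∈ Finset.range m, (eulerianNumber m k : ℚ)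
      * (((k : ℚ) + 1) * f k + ((m : ℚ) - (k : ℚ)) * f (k + 1))
      = ∑ k ∈ Finset.range m, (((k : ℚ) + 1) * (eulerianNumber m k : ℚ) * f k
        + ((m : ℚ) - (k : ℚ)) * (eulerianNumber m k : ℚ) * f (k + 1)) := by
    apply Finset.sum_congr rfl
    intro k _
    ring
  rw [h5, Finset.sum_add_distrib]
  ring

end EulerAux

namespace EulerAux

lemma M0 (m : ℕ) (hm : 1 ≤ m) :
    ∑ k ∈ Finset.range m, (eulerianNumber m k : ℚ) = (m.factorial : ℚ) := by
  induction m, hm using Nat.le_induction with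
  | base => simp [eulerian_zero]
  | succ m hm ih =>
    have h := step_sum m hm (fun _ => 1)
    simp only [mul_one] at h
    rw [h]
    have h2 : ∀ k ∈ Finset.range m, (eulerianNumber m k : ℚ) * (((k : ℚ) + 1) + ((m : ℚ) - k))
        = ((m : ℚ) + 1) * (eulerianNumber m k : ℚ) := fun k _ => by ring
    rw [Finset.sum_congr rfl h2, ← Finset.mul_sum, ih, Nat.factorial_succ]
    push_cast
    ring

lemma M1 (m : ℕ) (hm : 1 ≤ m) :
    ∑ k ∈ Finset.range m, (eulerianNumber m k : ℚ) * (k : ℚ)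
      = (m.factorial : ℚ) * ((m : ℚ) - 1) / 2 := by
  induction m, hm using Nat.le_induction with
  | base => simp
  | succ m hm ih =>
    have h := step_sum m hm (fun k => (k : ℚ))
    rw [h]
    have h2 : ∀ k ∈ Finset.range m,
        (eulerianNumber m k : ℚ) * (((k : ℚ) + 1) * (k : ℚ) + ((m : ℚ) - k) * ((k + 1 : ℕ) : ℚ))
        = (m : ℚ) * ((eulerianNumber m k : ℚ) * (k : ℚ)) + (m : ℚ) * (eulerianNumber m k : ℚ) := by
      intro k _
      push_cast
      ring
    rw [Finset.sum_congr rfl h2, Finset.sum_add_distrib, ← Finset.mul_sum, ← Finset.mul_sum,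
      ih, M0 m hm, Nat.factorial_succ]
    push_cast
    ring

lemma M2 (m : ℕ) (hm : 2 ≤ m) :
    ∑ k ∈ Finset.range m, (eulerianNumber m k : ℚ) * (k : ℚ) ^ 2
      = (m.factorial : ℚ) * (3 * (m : ℚ) ^ 2 - 5 * m + 4) / 12 := by
  induction m, hm using Nat.le_induction with
  | base =>
    simp [Finset.sum_range_succ, E21, eulerian_zero]
    norm_num [Nat.factorial]
  | succ m hm ih =>
    have h := step_sum m (by omega) (fun k => (k : ℚ) ^ 2)
    rw [h]
    have h2 : ∀ k ∈ Finset.range m,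
        (eulerianNumber m k : ℚ) * (((k : ℚ) + 1) * (k : ℚ) ^ 2 + ((m : ℚ) - k) * ((k + 1 : ℕ) : ℚ) ^ 2)
        = ((m : ℚ) - 1) * ((eulerianNumber m k : ℚ) * (k : ℚ) ^ 2)
          + (2 * (m : ℚ) - 1) * ((eulerianNumber m k : ℚ) * (k : ℚ))
          + (m : ℚ) * (eulerianNumber m k : ℚ) := by
      intro k _
      push_cast
      ring
    rw [Finset.sum_congr rfl h2, Finset.sum_add_distrib, Finset.sum_add_distrib,
      ← Finset.mul_sum, ← Finset.mul_sum, ← Finset.mul_sum,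
      ih, M1 m (by omega), M0 m (by omega), Nat.factorial_succ]
    push_cast
    ring

lemma M3 (m : ℕ) (hm : 1 ≤ m) :
    ∑ k ∈ Finset.range m, (eulerianNumber m k : ℚ) * (k : ℚ) ^ 3
      = (m.factorial : ℚ) * ((m : ℚ) ^ 3 - 2 * (m : ℚ) ^ 2 + 3 * m - 2) / 8 := by
  induction m, hm using Nat.le_induction with
  | base =>
    simp [Nat.factorial]
    norm_num
  | succ m hm ih =>
    have h := step_sum m hm (fun k => (k : ℚ) ^ 3)
    rw [h]
    have h2 : ∀ k ∈ Finset.range m,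
        (eulerianNumber m k : ℚ) * (((k : ℚ) + 1) * (k : ℚ) ^ 3 + ((m : ℚ) - k) * ((k + 1 : ℕ) : ℚ) ^ 3)
        = ((m : ℚ) - 2) * ((eulerianNumber m k : ℚ) * (k : ℚ) ^ 3)
          + (3 * (m : ℚ) - 3) * ((eulerianNumber m k : ℚ) * (k : ℚ) ^ 2)
          + (3 * (m : ℚ) - 1) * ((eulerianNumber m k : ℚ) * (k : ℚ))
          + (m : ℚ) * (eulerianNumber m k : ℚ) := by
      intro k _
      push_cast
      ring
    rcases Nat.lt_or_ge m 2 with hm2 | hm2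
    · -- m = 1 : compute directly
      interval_cases m
      · simp [Finset.sum_range_succ, E21, eulerian_zero, Nat.factorial]
        norm_num
    · rw [Finset.sum_congr rfl h2, Finset.sum_add_distrib, Finset.sum_add_distrib,
        Finset.sum_add_distrib, ← Finset.mul_sum, ← Finset.mul_sum, ← Finset.mul_sum,
        ← Finset.mul_sum, ih, M2 m hm2, M1 m hm, M0 m hm, Nat.factorial_succ]
      push_cast
      ring

lemma M4 (m : ℕ) (hm : 4 ≤ m) :
    ∑ k ∈ Finset.range m, (eulerianNumber m k : ℚ) * (k : ℚ) ^ 4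
      = (m.factorial : ℚ) * (15 * (m : ℚ) ^ 4 - 30 * (m : ℚ) ^ 3 + 65 * (m : ℚ) ^ 2
          - 82 * m + 48) / 240 := by
  induction m, hm using Nat.le_induction with
  | base =>
    simp [Finset.sum_range_succ, E41, E42, E43, eulerian_zero]
    norm_num [Nat.factorial]
  | succ m hm ih =>
    have h := step_sum m (by omega) (fun k => (k : ℚ) ^ 4)
    rw [h]
    have h2 : ∀ k ∈ Finset.range m,
        (eulerianNumber m k : ℚ) * (((k : ℚ) + 1) * (k : ℚ) ^ 4 + ((m : ℚ) - k) * ((k + 1 : ℕ) : ℚ) ^ 4)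
        = ((m : ℚ) - 3) * ((eulerianNumber m k : ℚ) * (k : ℚ) ^ 4)
          + (4 * (m : ℚ) - 6) * ((eulerianNumber m k : ℚ) * (k : ℚ) ^ 3)
          + (6 * (m : ℚ) - 4) * ((eulerianNumber m k : ℚ) * (k : ℚ) ^ 2)
          + (4 * (m : ℚ) - 1) * ((eulerianNumber m k : ℚ) * (k : ℚ))
          + (m : ℚ) * (eulerianNumber m k : ℚ) := by
      intro k _
      push_cast
      ring
    rw [Finset.sum_congr rfl h2, Finset.sum_add_distrib, Finset.sum_add_distrib,
      Finset.sum_add_distrib, Finset.sum_add_distrib, ← Finset.mul_sum, ← Finset.mul_sum,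
      ← Finset.mul_sum, ← Finset.mul_sum, ← Finset.mul_sum,
      ih, M3 m (by omega), M2 m (by omega), M1 m (by omega), M0 m (by omega), Nat.factorial_succ]
    push_cast
    ring

end EulerAux


open EulerAux in
/-- For every `n ≥ 5`,
`∑_{ℓ=1}^{n-1} (A(n-1, ℓ-1)/(n-1)!) · ℓ(n-2ℓ)(n² - 4nℓ + 4ℓ² - n) = n/15`. -/
theorem eulerian_identity (n : ℕ) (hn : 5 ≤ n) :
    ∑ ℓ ∈ Finset.Icc 1 (n - 1),
      ((eulerianNumber (n - 1) (ℓ - 1) : ℚ) / (Nat.factorial (n - 1) : ℚ)) *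
        ((ℓ : ℚ) * ((n : ℚ) - 2 * ℓ) * ((n : ℚ) ^ 2 - 4 * n * ℓ + 4 * (ℓ : ℚ) ^ 2 - n)) =
      (n : ℚ) / 15 := by
  obtain ⟨m, rfl⟩ : ∃ m, n = m + 1 := ⟨n - 1, by omega⟩
  have hm : 4 ≤ m := by omega
  have hn1 : m + 1 - 1 = m := rfl
  rw [hn1]
  rw [← Finset.Ico_add_one_right_eq_Icc, Finset.sum_Ico_eq_sum_range]
  have hrange : m + 1 - 1 = m := rfl
  rw [hrange]
  have hfac : (m.factorial : ℚ) ≠ 0 := by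
    exact_mod_cast Nat.factorial_ne_zero m
  have key : ∑ i ∈ Finset.range m, (eulerianNumber m i : ℚ) *
      (((1 + i : ℕ) : ℚ) * (((m + 1 : ℕ) : ℚ) - 2 * ((1 + i : ℕ) : ℚ)) *
        (((m + 1 : ℕ) : ℚ) ^ 2 - 4 * ((m + 1 : ℕ) : ℚ) * ((1 + i : ℕ) : ℚ)
          + 4 * ((1 + i : ℕ) : ℚ) ^ 2 - ((m + 1 : ℕ) : ℚ)))
      = (m.factorial : ℚ) * ((m : ℚ) + 1) / 15 := by
    have h2 : ∀ i ∈ Finset.range m, (eulerianNumber m i : ℚ) *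
        (((1 + i : ℕ) : ℚ) * (((m + 1 : ℕ) : ℚ) - 2 * ((1 + i : ℕ) : ℚ)) *
          (((m + 1 : ℕ) : ℚ) ^ 2 - 4 * ((m + 1 : ℕ) : ℚ) * ((1 + i : ℕ) : ℚ)
            + 4 * ((1 + i : ℕ) : ℚ) ^ 2 - ((m + 1 : ℕ) : ℚ)))
        = (-8) * ((eulerianNumber m i : ℚ) * (i : ℚ) ^ 4)
          + (12 * (m : ℚ) - 20) * ((eulerianNumber m i : ℚ) * (i : ℚ) ^ 3)
          + (-(6 * (m : ℚ) ^ 2) + 26 * (m : ℚ) - 16) * ((eulerianNumber m i : ℚ) * (i : ℚ) ^ 2)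
          + ((m : ℚ) ^ 3 - 10 * (m : ℚ) ^ 2 + 17 * (m : ℚ) - 4) * ((eulerianNumber m i : ℚ) * (i : ℚ))
          + ((m : ℚ) ^ 3 - 4 * (m : ℚ) ^ 2 + 3 * (m : ℚ)) * (eulerianNumber m i : ℚ) := by
      intro i _
      push_cast
      ring
    rw [Finset.sum_congr rfl h2, Finset.sum_add_distrib, Finset.sum_add_distrib,
      Finset.sum_add_distrib, Finset.sum_add_distrib, ← Finset.mul_sum, ← Finset.mul_sum,
      ← Finset.mul_sum, ← Finset.mul_sum, ← Finset.mul_sum,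
      M4 m hm, M3 m (by omega), M2 m (by omega), M1 m (by omega), M0 m (by omega)]
    field_simp
    ring
  have h3 : ∀ i ∈ Finset.range m,
      ((eulerianNumber m ((1 + i) - 1) : ℚ) / (Nat.factorial m : ℚ)) *
        (((1 + i : ℕ) : ℚ) * (((m + 1 : ℕ) : ℚ) - 2 * ((1 + i : ℕ) : ℚ)) *
          (((m + 1 : ℕ) : ℚ) ^ 2 - 4 * ((m + 1 : ℕ) : ℚ) * ((1 + i : ℕ) : ℚ)
            + 4 * ((1 + i : ℕ) : ℚ) ^ 2 - ((m + 1 : ℕ) : ℚ)))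
      = ((eulerianNumber m i : ℚ) *
        (((1 + i : ℕ) : ℚ) * (((m + 1 : ℕ) : ℚ) - 2 * ((1 + i : ℕ) : ℚ)) *
          (((m + 1 : ℕ) : ℚ) ^ 2 - 4 * ((m + 1 : ℕ) : ℚ) * ((1 + i : ℕ) : ℚ)
            + 4 * ((1 + i : ℕ) : ℚ) ^ 2 - ((m + 1 : ℕ) : ℚ)))) / (Nat.factorial m : ℚ) := by
    intro i _
    rw [Nat.add_sub_cancel_left]
    ring
  rw [Finset.sum_congr rfl h3, ← Finset.sum_div, key]
  field_simp
  push_cast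
  ring
end

section
/- Let s = (s_1,...,s_{n-1},s_n, s_n+1) be a sequence of positive integers of length n+1 and s' = (s_1,...,s_{n-1},s_n) of length n. Then the s-Eulerian polynomial satisfies E_{n+1}^{s}(t) = E_{n+1}^{(s', s_n)}(t) + t · E_n^{s'}(t). -/
open Finset Polynomial

/-- The ratio `e_k / s_k` for `1 ≤ k ≤ n`, with the convention `e_0 / s_0 = 0`
(so that there is an ascent at position `0` iff `e_1 > 0`). -/
noncomputable def ratioSeq {n : ℕ} (s e : Fin n → ℕ) (k : ℕ) : ℚ :=
  if h : 1 ≤ k ∧ k ≤ n then (e ⟨k - 1, by omega⟩ : ℚ) / (s ⟨k - 1, by omega⟩ : ℚ) else 0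

/-- The number of ascents of an `s`-inversion sequence `e`: the number of positions
`0 ≤ i < n` with `e_i/s_i < e_{i+1}/s_{i+1}`. -/
noncomputable def ascNum {n : ℕ} (s e : Fin n → ℕ) : ℕ :=
  ((Finset.range n).filter (fun i => ratioSeq s e i < ratioSeq s e (i + 1))).card

/-- The `s`-Eulerian polynomial `E_n^s(t) = ∑_{e ∈ I_n^s} t^{asc e}`. -/
noncomputable def sEulerian (n : ℕ) (s : Fin n → ℕ) : Polynomial ℚ :=
  ∑ e ∈ Fintype.piFinset (fun i => Finset.range (s i)), Polynomial.X ^ ascNum s e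

lemma ratioSeq_snoc_of_le {n : ℕ} (s' f : Fin n → ℕ) (v c k : ℕ) (hk : k ≤ n) :
    ratioSeq (Fin.snoc s' v) (Fin.snoc f c) k = ratioSeq s' f k := by
  unfold ratioSeq
  split_ifs with h1 h2 h2
  · have hlt : k - 1 < n := by omega
    have h1' : (⟨k - 1, by omega⟩ : Fin (n + 1)) = Fin.castSucc ⟨k - 1, hlt⟩ := rfl
    rw [h1', Fin.snoc_castSucc, Fin.snoc_castSucc]
  · omega
  · omega
  · rfl

lemma ratioSeq_snoc_last {n : ℕ} (s' f : Fin n → ℕ) (v c : ℕ) :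
    ratioSeq (Fin.snoc s' v) (Fin.snoc f c) (n + 1) = (c : ℚ) / (v : ℚ) := by
  unfold ratioSeq
  rw [dif_pos ⟨by omega, le_refl _⟩]
  have h1 : (⟨n + 1 - 1, by omega⟩ : Fin (n + 1)) = Fin.last n := rfl
  rw [h1, Fin.snoc_last, Fin.snoc_last]

lemma ascNum_snoc {n : ℕ} (s' f : Fin n → ℕ) (v c : ℕ) :
    ascNum (Fin.snoc s' v) (Fin.snoc f c) =
      ascNum s' f + (if ratioSeq s' f n < (c : ℚ) / (v : ℚ) then 1 else 0) := by
  unfold ascNum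
  have key : (Finset.range n).filter
      (fun i => ratioSeq (Fin.snoc s' v) (Fin.snoc f c) i <
        ratioSeq (Fin.snoc s' v) (Fin.snoc f c) (i + 1)) =
      (Finset.range n).filter (fun i => ratioSeq s' f i < ratioSeq s' f (i + 1)) := by
    apply Finset.filter_congr
    intro i hi
    simp only [Finset.mem_range] at hi
    rw [ratioSeq_snoc_of_le _ _ _ _ _ (by omega), ratioSeq_snoc_of_le _ _ _ _ _ (by omega)]
  rw [Finset.range_add_one, Finset.filter_insert,
    ratioSeq_snoc_of_le s' f v c n le_rfl, ratioSeq_snoc_last, key]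
  split_ifs with h
  · rw [Finset.card_insert_of_notMem (by simp)]
  · simp

lemma rat_div_lt_div_iff (f c m : ℕ) (hm : 0 < m) (hf : f < m) (hc : c ≤ m) :
    ((f : ℚ) / m < (c : ℚ) / ((m + 1 : ℕ) : ℚ)) ↔ f < c := by
  push_cast
  rw [div_lt_div_iff₀ (by positivity) (by positivity)]
  constructor
  · intro h
    by_contra hcf
    push_neg at hcf
    have : (c : ℚ) ≤ f := by exact_mod_cast hcf
    nlinarith [show (0:ℚ) ≤ (c:ℚ) by positivity]
  · intro h
    have h1 : (f : ℚ) + 1 ≤ c := by exact_mod_cast h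
    have h2 : (f : ℚ) < m := by exact_mod_cast hf
    nlinarith

lemma rat_div_lt_div_iff' (f c m : ℕ) (hm : 0 < m) :
    ((f : ℚ) / m < (c : ℚ) / m) ↔ f < c := by
  have hm' : (0 : ℚ) < m := by exact_mod_cast hm
  rw [div_lt_div_iff_of_pos_right hm', Nat.cast_lt]

lemma sum_piFinset_snoc {M : Type*} [AddCommMonoid M] {n : ℕ} (S : Fin n → Finset ℕ)
    (T : Finset ℕ) (F : (Fin (n + 1) → ℕ) → M) :
    ∑ e ∈ Fintype.piFinset (Fin.snoc S T), F e =
      ∑ f ∈ Fintype.piFinset S, ∑ c ∈ T, F (Fin.snoc f c) := by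
  rw [← Finset.sum_product']
  apply Finset.sum_bij' (fun e _ => (Fin.init e, e (Fin.last n)))
    (fun p _ => Fin.snoc p.1 p.2)
  · intro e he
    rw [Fin.mem_piFinset_iff_last_init, Fin.snoc_last] at he
    rw [Fin.init_snoc] at he
    simp only [Finset.mem_product]
    exact ⟨he.2, he.1⟩
  · intro p hp
    simp only [Finset.mem_product] at hp
    rw [Fin.snoc_mem_piFinset_snoc]
    exact ⟨hp.2, hp.1⟩
  · intro e _
    exact Fin.snoc_init_self e
  · intro p _
    simp [Fin.init_snoc, Fin.snoc_last]
  · intro e _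
    rw [Fin.snoc_init_self e]

/-- For `s = (s_1,…,s_{n-1},s_n, s_n+1)` of length `n+1` and `s' = (s_1,…,s_n)`,
one has `E_{n+1}^{s}(t) = E_{n+1}^{(s', s_n)}(t) + t · E_n^{s'}(t)`. -/
theorem sEulerian_recursion (n : ℕ) (hn : 1 ≤ n) (s' : Fin n → ℕ)
    (hs : ∀ i, 0 < s' i) :
    sEulerian (n + 1) (Fin.snoc s' (s' ⟨n - 1, by omega⟩ + 1)) =
      sEulerian (n + 1) (Fin.snoc s' (s' ⟨n - 1, by omega⟩)) +
        Polynomial.X * sEulerian n s' := by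
  set m := s' ⟨n - 1, by omega⟩ with hm_def
  have hm : 0 < m := hs _
  have hfam : ∀ v : ℕ, (fun i : Fin (n + 1) => Finset.range (Fin.snoc (α := fun _ => ℕ) s' v i)) =
      Fin.snoc (fun i => Finset.range (s' i)) (Finset.range v) := by
    intro v
    exact (Fin.comp_snoc Finset.range s' v)
  unfold sEulerian
  rw [hfam, hfam, sum_piFinset_snoc, sum_piFinset_snoc, Finset.mul_sum, ← Finset.sum_add_distrib]
  apply Finset.sum_congr rfl
  intro f hf
  have hfmem : ∀ i, f i < s' i := by
    intro i
    have := Fintype.mem_piFinset.mp hf i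
    simpa using this
  have hrat : ratioSeq s' f n = (f ⟨n - 1, by omega⟩ : ℚ) / (s' ⟨n - 1, by omega⟩ : ℚ) := by
    unfold ratioSeq
    rw [dif_pos ⟨hn, le_rfl⟩]
  have hflt : f ⟨n - 1, by omega⟩ < m := hfmem _
  -- split last value range (m+1) = insert m (range m)
  rw [Finset.range_add_one, Finset.sum_insert (by simp)]
  have hstep : ∀ c ∈ Finset.range m,
      (Polynomial.X : Polynomial ℚ) ^ ascNum (Fin.snoc s' (m + 1)) (Fin.snoc f c) =
        Polynomial.X ^ ascNum (Fin.snoc s' m) (Fin.snoc f c) := by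
    intro c hc
    simp only [Finset.mem_range] at hc
    rw [ascNum_snoc, ascNum_snoc, hrat, ← hm_def]
    congr 1
    simp only [rat_div_lt_div_iff _ _ _ hm hflt hc.le, rat_div_lt_div_iff' _ _ _ hm]
  have hlast : (Polynomial.X : Polynomial ℚ) ^ ascNum (Fin.snoc s' (m + 1)) (Fin.snoc f m) =
      Polynomial.X * Polynomial.X ^ ascNum s' f := by
    rw [ascNum_snoc, hrat, ← hm_def]
    rw [if_pos, pow_succ, mul_comm]
    exact (rat_div_lt_div_iff _ _ _ hm hflt le_rfl).mpr hflt
  rw [Finset.sum_congr rfl hstep, hlast]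
  ring
end

section
/- For the sequence s = (1, 2, ..., n), the s-Eulerian polynomial equals the classical Eulerian polynomial ∑_{k=0}^{n-1} A(n,k) t^k, where A(n,k) counts permutations of {1,...,n} with exactly k ascents. -/
open Finset Polynomial

/-- The code of a permutation: `pcode σ j = #{k < j : σ k < σ j}`. -/
def pcode {n : ℕ} (σ : Equiv.Perm (Fin n)) : Fin n → ℕ :=
  fun j => (Finset.univ.filter (fun k => k < j ∧ σ k < σ j)).card

lemma pcode_le {n : ℕ} (σ : Equiv.Perm (Fin n)) (j : Fin n) : pcode σ j ≤ (j : ℕ) := by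
  have h : (Finset.univ.filter (fun k => k < j ∧ σ k < σ j)).card
      ≤ (Finset.range (j : ℕ)).card := by
    refine Finset.card_le_card_of_injOn (fun k => (k : ℕ)) ?_ ?_
    · intro k hk
      simp only [Finset.mem_coe, Finset.mem_filter, Finset.mem_univ, true_and] at hk
      exact Finset.mem_range.mpr hk.1
    · intro a _ b _ hab
      exact Fin.val_injective hab
  simpa [pcode] using h

lemma pcode_zero {n : ℕ} (σ : Equiv.Perm (Fin n)) (h : 0 < n) : pcode σ ⟨0, h⟩ = 0 := by
  rw [pcode, Finset.card_eq_zero, Finset.filter_eq_empty_iff]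
  intro k _
  rintro ⟨hk, -⟩
  rw [Fin.lt_def] at hk
  simp at hk

lemma pcode_add {n : ℕ} (σ : Equiv.Perm (Fin n)) (j : Fin n) :
    pcode σ j + (Finset.univ.filter (fun k => j < k ∧ σ k < σ j)).card = (σ j : ℕ) := by
  classical
  rw [pcode, ← Finset.card_union_of_disjoint (by
    rw [Finset.disjoint_left]
    intro k h1 h2
    simp only [Finset.mem_filter, Finset.mem_univ, true_and] at h1 h2
    exact absurd h2.1 (lt_asymm h1.1))]
  rw [← Finset.filter_or]
  have h1 : Finset.univ.filter (fun k => (k < j ∧ σ k < σ j) ∨ (j < k ∧ σ k < σ j))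
      = Finset.univ.filter (fun k => σ k < σ j) := by
    apply Finset.filter_congr
    intro k _
    constructor
    · rintro (⟨_, h⟩ | ⟨_, h⟩) <;> exact h
    · intro h
      have hk : k ≠ j := by
        intro e; rw [e] at h; exact absurd h (lt_irrefl _)
      rcases lt_or_gt_of_ne hk with h' | h'
      · exact Or.inl ⟨h', h⟩
      · exact Or.inr ⟨h', h⟩
  rw [h1]
  have h2 : Finset.univ.filter (fun k => σ k < σ j)
      = (Finset.univ.filter (fun v => v < σ j)).map σ.symm.toEmbedding := by
    ext k
    simp only [Finset.mem_filter, Finset.mem_univ, true_and, Finset.mem_map,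
      Equiv.coe_toEmbedding, Equiv.symm_apply_eq]
    constructor
    · intro h; exact ⟨σ k, h, rfl⟩
    · rintro ⟨v, hv, rfl⟩; simpa using hv
  rw [h2, Finset.card_map]
  have h3 : Finset.univ.filter (fun v : Fin n => v < σ j) = Finset.Iio (σ j) := by
    ext v; simp
  rw [h3, Fin.card_Iio]

lemma pcode_ascent {n : ℕ} (σ : Equiv.Perm (Fin n)) (j : Fin n) (h : (j : ℕ) + 1 < n) :
    pcode σ j < pcode σ ⟨(j : ℕ) + 1, h⟩ ↔ σ j < σ ⟨(j : ℕ) + 1, h⟩ := by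
  set j' : Fin n := ⟨(j : ℕ) + 1, h⟩ with hj'
  have hjj' : j < j' := by
    rw [Fin.lt_def]; simp [hj']
  have hne : σ j ≠ σ j' := fun e => absurd (σ.injective e) (Fin.ne_of_lt hjj')
  constructor
  · intro hlt
    rcases lt_or_gt_of_ne hne with h' | h'
    · exact h'
    · exfalso
      have hsub : Finset.univ.filter (fun k => k < j' ∧ σ k < σ j')
          ⊆ Finset.univ.filter (fun k => k < j ∧ σ k < σ j) := by
        intro k hk
        simp only [Finset.mem_filter, Finset.mem_univ, true_and] at hk ⊢
        have h1 : σ k < σ j := lt_trans hk.2 h'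
        have h2 : k ≠ j := by
          intro e; rw [e] at h1; exact absurd h1 (lt_irrefl _)
        have h3 : (k : ℕ) ≠ (j : ℕ) := fun e => h2 (Fin.ext e)
        have h4 : (k : ℕ) < (j : ℕ) + 1 := hk.1
        exact ⟨by rw [Fin.lt_def]; omega, h1⟩
      exact absurd hlt (not_lt.mpr (Finset.card_le_card hsub))
  · intro h'
    have hjnot : j ∉ Finset.univ.filter (fun k => k < j ∧ σ k < σ j) := by
      simp
    have hsub : insert j (Finset.univ.filter (fun k => k < j ∧ σ k < σ j))
        ⊆ Finset.univ.filter (fun k => k < j' ∧ σ k < σ j') := by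
      intro k hk
      rcases Finset.mem_insert.mp hk with rfl | hk
      · simp only [Finset.mem_filter, Finset.mem_univ, true_and]
        exact ⟨hjj', h'⟩
      · simp only [Finset.mem_filter, Finset.mem_univ, true_and] at hk ⊢
        exact ⟨lt_trans hk.1 hjj', lt_trans hk.2 h'⟩
    have := Finset.card_le_card hsub
    rw [Finset.card_insert_of_notMem hjnot] at this
    change pcode σ j + 1 ≤ pcode σ j' at this
    omega

lemma pcode_step {n : ℕ} (σ τ : Equiv.Perm (Fin n)) (j : Fin n)
    (habove : ∀ k : Fin n, j < k → σ k = τ k)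
    (hc : pcode σ j = pcode τ j) (hab : σ j < τ j) : False := by
  classical
  have hA := pcode_add σ j
  have hB := pcode_add τ j
  have hBset : Finset.univ.filter (fun k => j < k ∧ τ k < τ j)
      = Finset.univ.filter (fun k => j < k ∧ σ k < τ j) := by
    apply Finset.filter_congr
    intro k _
    constructor
    · rintro ⟨hk, hv⟩; exact ⟨hk, by rwa [habove k hk]⟩
    · rintro ⟨hk, hv⟩; exact ⟨hk, by rwa [← habove k hk]⟩
  rw [hBset] at hB
  have hsplit : Finset.univ.filter (fun k => j < k ∧ σ k < τ j)
      = (Finset.univ.filter (fun k => j < k ∧ σ k < σ j)) ∪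
        (Finset.univ.filter (fun k => j < k ∧ σ j ≤ σ k ∧ σ k < τ j)) := by
    rw [← Finset.filter_or]
    apply Finset.filter_congr
    intro k _
    constructor
    · rintro ⟨hk, hv⟩
      rcases lt_or_ge (σ k) (σ j) with h' | h'
      · exact Or.inl ⟨hk, h'⟩
      · exact Or.inr ⟨hk, h', hv⟩
    · rintro (⟨hk, hv⟩ | ⟨hk, _, hv⟩)
      · exact ⟨hk, lt_trans hv hab⟩
      · exact ⟨hk, hv⟩
  have hdisj : Disjoint (Finset.univ.filter (fun k => j < k ∧ σ k < σ j))
      (Finset.univ.filter (fun k => j < k ∧ σ j ≤ σ k ∧ σ k < τ j)) := by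
    rw [Finset.disjoint_left]
    intro k h1 h2
    simp only [Finset.mem_filter, Finset.mem_univ, true_and] at h1 h2
    exact absurd h2.2.1 (not_le.mpr h1.2)
  rw [hsplit, Finset.card_union_of_disjoint hdisj] at hB
  set M := Finset.univ.filter (fun k => j < k ∧ σ j ≤ σ k ∧ σ k < τ j) with hM
  have hMcard : M.card ≤ (Finset.Ioo (σ j : ℕ) (τ j : ℕ)).card := by
    refine Finset.card_le_card_of_injOn (fun k => (σ k : ℕ)) ?_ ?_
    · intro k hk
      simp only [hM, Finset.mem_coe, Finset.mem_filter, Finset.mem_univ, true_and] at hk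
      show (σ k : ℕ) ∈ Finset.Ioo (σ j : ℕ) (τ j : ℕ)
      rw [Finset.mem_Ioo]
      have hne : σ k ≠ σ j := by
        intro e
        exact absurd (σ.injective e) (Fin.ne_of_gt hk.1)
      have h1 : (σ j : ℕ) ≤ (σ k : ℕ) := hk.2.1
      have h2 : (σ k : ℕ) ≠ (σ j : ℕ) := fun e => hne (Fin.ext e)
      exact ⟨by omega, hk.2.2⟩
    · intro a _ b _ hab2
      exact σ.injective (Fin.ext hab2)
  rw [Nat.card_Ioo] at hMcard
  have h1 : (σ j : ℕ) < (τ j : ℕ) := hab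
  omega

lemma pcode_inj {n : ℕ} : Function.Injective (pcode : Equiv.Perm (Fin n) → (Fin n → ℕ)) := by
  intro σ τ hcode
  have key : ∀ m : ℕ, ∀ j : Fin n, n - (j : ℕ) ≤ m → σ j = τ j := by
    intro m
    induction m with
    | zero => intro j hj; exact absurd j.isLt (by omega)
    | succ m ih =>
      intro j _
      have habove : ∀ k : Fin n, j < k → σ k = τ k := by
        intro k hk
        apply ih
        have h1 := k.isLt
        have h2 : (j : ℕ) < (k : ℕ) := hk
        omega
      rcases lt_trichotomy (σ j) (τ j) with h | h | h
      · exact absurd h (fun h => pcode_step σ τ j habove (congrFun hcode j) h)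
      · exact h
      · exact absurd h (fun h => pcode_step τ σ j (fun k hk => (habove k hk).symm)
          (congrFun hcode j).symm h)
  apply Equiv.ext
  intro j
  exact key n j (by omega)

lemma pcode_mem {n : ℕ} (σ : Equiv.Perm (Fin n)) :
    pcode σ ∈ Fintype.piFinset (fun i : Fin n => Finset.range ((i : ℕ) + 1)) := by
  rw [Fintype.mem_piFinset]
  intro i
  rw [Finset.mem_range]
  exact Nat.lt_succ_of_le (pcode_le σ i)

lemma pcode_image {n : ℕ} :
    (Finset.univ.image (pcode : Equiv.Perm (Fin n) → (Fin n → ℕ)))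
      = Fintype.piFinset (fun i : Fin n => Finset.range ((i : ℕ) + 1)) := by
  apply Finset.eq_of_subset_of_card_le
  · intro e he
    rcases Finset.mem_image.mp he with ⟨σ, _, rfl⟩
    exact pcode_mem σ
  · rw [Finset.card_image_of_injective _ pcode_inj, Fintype.card_piFinset]
    simp only [Finset.card_range, Finset.card_univ, Fintype.card_perm, Fintype.card_fin]
    rw [Fin.prod_univ_eq_prod_range (fun i => i + 1) n,
      Finset.prod_range_add_one_eq_factorial]

lemma ratio_lt_iff (a b i : ℕ) (ha : a < i) (hb : b ≤ i) :
    ((a : ℚ) / (i : ℚ) < (b : ℚ) / ((i : ℚ) + 1)) ↔ a < b := by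
  have hi : (0 : ℚ) < (i : ℚ) := by
    have : 0 < i := by omega
    exact_mod_cast this
  rw [div_lt_div_iff₀ hi (by positivity)]
  have key : a * (i + 1) < b * i ↔ a < b := by
    constructor
    · intro h
      by_contra hba
      push_neg at hba
      nlinarith
    · intro h
      nlinarith
  calc (a : ℚ) * ((i : ℚ) + 1) < (b : ℚ) * (i : ℚ)
      ↔ ((a * (i + 1) : ℕ) : ℚ) < ((b * i : ℕ) : ℚ) := by push_cast; ring_nf
    _ ↔ a * (i + 1) < b * i := by exact_mod_cast Iff.rfl
    _ ↔ a < b := key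

lemma ratioSeq_eq {n : ℕ} (e : Fin n → ℕ) (k : ℕ) (h1 : 1 ≤ k) (h2 : k ≤ n) :
    ratioSeq (fun j : Fin n => (j : ℕ) + 1) e k
      = (e ⟨k - 1, by omega⟩ : ℚ) / (k : ℚ) := by
  rw [ratioSeq, dif_pos ⟨h1, h2⟩]
  congr 1
  have h : ((⟨k - 1, by omega⟩ : Fin n) : ℕ) + 1 = k := by
    simp only [Fin.val_mk]; omega
  exact_mod_cast h

lemma ratio_asc_iff {n : ℕ} (σ : Equiv.Perm (Fin n)) (i : ℕ) (h1 : 1 ≤ i) (h2 : i < n) :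
    (ratioSeq (fun j : Fin n => (j : ℕ) + 1) (pcode σ) i <
     ratioSeq (fun j : Fin n => (j : ℕ) + 1) (pcode σ) (i + 1))
    ↔ σ ⟨i - 1, by omega⟩ < σ ⟨i, h2⟩ := by
  rw [ratioSeq_eq _ i h1 (le_of_lt h2), ratioSeq_eq _ (i + 1) (by omega) h2]
  simp only [Nat.add_sub_cancel]
  rw [show ((i + 1 : ℕ) : ℚ) = (i : ℚ) + 1 by push_cast; ring]
  rw [ratio_lt_iff _ _ i (by have := pcode_le σ ⟨i - 1, by omega⟩; simp at this; omega)
    (by have := pcode_le σ ⟨i, h2⟩; simpa using this)]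
  have hprev : (i - 1 : ℕ) + 1 < n := by omega
  have := pcode_ascent σ ⟨i - 1, by omega⟩ (by simpa using hprev)
  have heq : (⟨((⟨i - 1, by omega⟩ : Fin n) : ℕ) + 1, by simpa using hprev⟩ : Fin n)
      = ⟨i, h2⟩ := by
    apply Fin.ext; simp; omega
  rw [heq] at this
  exact this

lemma ratio_asc_zero {n : ℕ} (σ : Equiv.Perm (Fin n)) (hn : 1 ≤ n) :
    ¬ (ratioSeq (fun j : Fin n => (j : ℕ) + 1) (pcode σ) 0 <
       ratioSeq (fun j : Fin n => (j : ℕ) + 1) (pcode σ) 1) := by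
  rw [ratioSeq_eq _ 1 le_rfl hn]
  rw [ratioSeq, dif_neg (by omega)]
  have h0 : pcode σ ⟨1 - 1, by omega⟩ = 0 := pcode_zero σ (by omega)
  rw [h0]
  norm_num

lemma ascNum_pcode {n : ℕ} (hn : 1 ≤ n) (σ : Equiv.Perm (Fin n)) :
    ascNum (fun i : Fin n => (i : ℕ) + 1) (pcode σ) =
      (Finset.univ.filter (fun i : Fin n =>
        if h : (i : ℕ) + 1 < n then σ i < σ ⟨(i : ℕ) + 1, h⟩ else False)).card := by
  rw [ascNum]
  refine Finset.card_bij'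
    (fun i hi => (⟨i - 1, by
      have h := (Finset.mem_filter.mp hi).1
      rw [Finset.mem_range] at h; omega⟩ : Fin n))
    (fun j _ => (j : ℕ) + 1) ?_ ?_ ?_ ?_
  · intro i hi
    rw [Finset.mem_filter] at hi
    obtain ⟨hir, hasc⟩ := hi
    rw [Finset.mem_range] at hir
    have h1 : 1 ≤ i := by
      by_contra h0
      have : i = 0 := by omega
      subst this
      exact ratio_asc_zero σ hn hasc
    rw [Finset.mem_filter]
    refine ⟨Finset.mem_univ _, ?_⟩
    have hlt : (i - 1 : ℕ) + 1 < n := by omega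
    rw [dif_pos (by simpa using hlt)]
    have := (ratio_asc_iff σ i h1 hir).mp hasc
    convert this using 2
    apply Fin.ext
    simp
    omega
  · intro j hj
    rw [Finset.mem_filter] at hj
    obtain ⟨-, hj⟩ := hj
    by_cases h : (j : ℕ) + 1 < n
    · rw [dif_pos h] at hj
      rw [Finset.mem_filter, Finset.mem_range]
      refine ⟨h, ?_⟩
      rw [ratio_asc_iff σ ((j : ℕ) + 1) (by omega) h]
      convert hj using 2 <;> apply Fin.ext <;> simp
    · rw [dif_neg h] at hj
      exact absurd hj id
  · intro i hi
    rw [Finset.mem_filter] at hi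
    obtain ⟨hir, hasc⟩ := hi
    rw [Finset.mem_range] at hir
    have h1 : 1 ≤ i := by
      by_contra h0
      have : i = 0 := by omega
      subst this
      exact ratio_asc_zero σ hn hasc
    simp only [Fin.val_mk]
    omega
  · intro j _
    apply Fin.ext
    simp

/-- For `s = (1, 2, …, n)`, the `s`-Eulerian polynomial is the classical Eulerian
polynomial `∑_{k=0}^{n-1} A(n,k) t^k`. -/
theorem sEulerian_natural_seq (n : ℕ) (hn : 1 ≤ n) :
    sEulerian n (fun i => (i : ℕ) + 1) =
      ∑ k ∈ Finset.range n, Polynomial.C (eulerianNumber n k : ℚ) * Polynomial.X ^ k := by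
  classical
  rw [sEulerian, ← pcode_image,
    Finset.sum_image (fun a _ b _ h => pcode_inj h)]
  rw [Finset.sum_congr rfl (fun σ _ => by rw [ascNum_pcode hn σ])]
  rw [← Finset.sum_fiberwise_of_maps_to (g := fun σ : Equiv.Perm (Fin n) =>
      (Finset.univ.filter (fun i : Fin n =>
        if h : (i : ℕ) + 1 < n then σ i < σ ⟨(i : ℕ) + 1, h⟩ else False)).card)
    (t := Finset.range n) ?_ _]
  · apply Finset.sum_congr rfl
    intro k _
    rw [Finset.sum_congr rfl (fun σ hσ => by
      rw [(Finset.mem_filter.mp hσ).2]), Finset.sum_const, nsmul_eq_mul]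
    rw [eulerianNumber]
    congr 1
  · intro σ _
    rw [Finset.mem_range]
    have hne : (⟨n - 1, by omega⟩ : Fin n) ∉ Finset.univ.filter (fun i : Fin n =>
        if h : (i : ℕ) + 1 < n then σ i < σ ⟨(i : ℕ) + 1, h⟩ else False) := by
      rw [Finset.mem_filter]
      rintro ⟨-, hmem⟩
      rw [dif_neg (by simp; omega)] at hmem
      exact hmem
    have hss : Finset.univ.filter (fun i : Fin n =>
        if h : (i : ℕ) + 1 < n then σ i < σ ⟨(i : ℕ) + 1, h⟩ else False) ⊂ Finset.univ := by
      rw [Finset.ssubset_iff_of_subset (Finset.subset_univ _)]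
      exact ⟨⟨n - 1, by omega⟩, Finset.mem_univ _, hne⟩
    have := Finset.card_lt_card hss
    simpa using this
end

section
/- Let s = (a, a, a+1) with a ≥ 1. Then the coefficient of t in the Ehrhart polynomial of the s-lecture hall simplex P_3^s equals (1/12)a² + (13/12)a + 1, which is positive; hence P_3^s is Ehrhart positive. -/
open Finset Pointwise Polynomial

/-- The `s`-lecture hall simplex `P_n^s = {x ∈ ℝ^n : 0 ≤ x_1/s_1 ≤ … ≤ x_n/s_n ≤ 1}`. -/
def lectureHall (n : ℕ) (s : Fin n → ℕ) : Set (Fin n → ℝ) :=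
  {x | (∀ i, 0 ≤ x i / (s i : ℝ) ∧ x i / (s i : ℝ) ≤ 1) ∧
    ∀ i j : Fin n, i ≤ j → x i / (s i : ℝ) ≤ x j / (s j : ℝ)}

/-- The number of lattice points of the `t`-th dilate of `P_n^s`. -/
noncomputable def lhCount (n : ℕ) (s : Fin n → ℕ) (t : ℕ) : ℕ :=
  Nat.card {z : Fin n → ℤ | (fun i => (z i : ℝ)) ∈ ((t : ℝ) • lectureHall n s)}


/-- inner count -/
def Scnt (a c : ℕ) : ℕ := ∑ y ∈ Finset.range (c+1), if (a+1)*y ≤ a*c then y+1 else 0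

/-- total count -/
def NN (a t : ℕ) : ℕ := ∑ c ∈ Finset.range ((a+1)*t+1), Scnt a c

lemma gauss (m : ℕ) : ((∑ y ∈ Finset.range m, (y+1) : ℕ) : ℚ) = m*(m+1)/2 := by
  induction m with
  | zero => simp
  | succ n ih => rw [Finset.sum_range_succ]; push_cast [ih]; ring

lemma sumT (c : ℕ) : ∀ n : ℕ, (∑ r ∈ Finset.range n, (((c:ℚ)+r+1)*((c:ℚ)+r+2)/2))
    = (((c:ℚ)+n)*((c:ℚ)+n+1)*((c:ℚ)+n+2) - (c:ℚ)*((c:ℚ)+1)*((c:ℚ)+2))/6 := by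
  intro n; induction n with
  | zero => simp
  | succ n ih => rw [Finset.sum_range_succ, ih]; push_cast; ring

lemma Scnt_eq (a : ℕ) (ha : 1 ≤ a) (t r : ℕ) (hr1 : 1 ≤ r) (hr2 : r ≤ a+1) :
    Scnt a ((a+1)*t + r) = ∑ y ∈ Finset.range (a*t+r), (y+1) := by
  unfold Scnt
  rw [← Finset.sum_filter]
  have hfil : (Finset.range ((a+1)*t + r + 1)).filter
      (fun y => (a+1)*y ≤ a*((a+1)*t + r)) = Finset.range (a*t+r) := by
    ext y
    simp only [Finset.mem_filter, Finset.mem_range]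
    constructor
    · rintro ⟨h1, h2⟩
      by_contra h
      push_neg at h
      nlinarith
    · intro h
      constructor
      · nlinarith
      · nlinarith
  rw [hfil]

lemma Scnt_zero (a : ℕ) : Scnt a 0 = 1 := by simp [Scnt]

lemma NN_succ (a t : ℕ) : NN a (t+1) = NN a t + ∑ r ∈ Finset.range (a+1), Scnt a ((a+1)*t+1+r) := by
  unfold NN
  rw [← Finset.sum_range_add_sum_Ico _ (show (a+1)*t+1 ≤ (a+1)*(t+1)+1 by nlinarith),
    Finset.sum_Ico_eq_sum_range]
  congr 1
  have : (a+1)*(t+1)+1 - ((a+1)*t+1) = a+1 := by ring_nf; omega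
  rw [this]

lemma key (a : ℕ) (ha : 1 ≤ a) : ∀ t : ℕ, (NN a t : ℚ) =
    (1/6*(a:ℚ)^3+1/6*(a:ℚ)^2)*t^3 + (3/4*(a:ℚ)^2+3/4*(a:ℚ))*t^2
      + (1/12*(a:ℚ)^2+13/12*(a:ℚ)+1)*t + 1 := by
  intro t; induction t with
  | zero => simp [NN, Scnt_zero]
  | succ t ih =>
    rw [NN_succ]
    have h1 : ((∑ r ∈ Finset.range (a+1), Scnt a ((a+1)*t+1+r) : ℕ) : ℚ)
        = ∑ r ∈ Finset.range (a+1), (((a*t : ℕ):ℚ)+r+1)*(((a*t : ℕ):ℚ)+r+2)/2 := by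
      push_cast
      refine Finset.sum_congr rfl fun r hr => ?_
      have hmem := Finset.mem_range.mp hr
      have : (a+1)*t+1+r = (a+1)*t + (r+1) := by ring
      rw [this, Scnt_eq a ha t (r+1) (by omega) (by omega), gauss]
      push_cast
      ring
    rw [sumT ((a*t : ℕ)) (a+1)] at h1
    push_cast at h1
    rw [Nat.cast_add, ih]
    push_cast
    rw [h1]
    ring




lemma mem_smul_lh (s : Fin 3 → ℕ) (hs : ∀ i, 0 < s i) (t : ℕ) (x : Fin 3 → ℝ) :
    x ∈ (t : ℝ) • lectureHall 3 s ↔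
    ((∀ i, 0 ≤ x i ∧ x i ≤ (s i : ℝ) * t) ∧
     ∀ i j : Fin 3, i ≤ j → x i * (s j : ℝ) ≤ x j * (s i : ℝ)) := by
  have hsR : ∀ i, (0:ℝ) < (s i : ℝ) := fun i => by exact_mod_cast hs i
  rcases Nat.eq_zero_or_pos t with ht | ht
  · subst ht
    have hne : (lectureHall 3 s).Nonempty := by
      refine ⟨0, ⟨fun i => ?_, fun i j _ => ?_⟩⟩
      · simp only [Pi.zero_apply, zero_div]
        exact ⟨le_refl _, zero_le_one⟩
      · simp only [Pi.zero_apply, zero_div, le_refl]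
    rw [Nat.cast_zero, Set.zero_smul_set hne]
    simp only [Set.mem_singleton_iff, Nat.cast_zero, mul_zero]
    constructor
    · rintro rfl
      constructor
      · intro i
        simp
      · intro i j _
        simp
    · rintro ⟨h1, _⟩
      funext i
      have := h1 i
      simpa using le_antisymm this.2 this.1
  · have htR : (0:ℝ) < (t:ℝ) := by exact_mod_cast ht
    have htne : (t:ℝ) ≠ 0 := ne_of_gt htR
    rw [Set.mem_smul_set_iff_inv_smul_mem₀ htne]
    simp only [lectureHall, Set.mem_setOf_eq, Pi.smul_apply, smul_eq_mul]
    have hdiv : ∀ i, (t:ℝ)⁻¹ * x i / (s i : ℝ) = x i / ((t:ℝ) * (s i : ℝ)) := by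
      intro i; field_simp
    constructor
    · rintro ⟨h1, h2⟩
      constructor
      · intro i
        have h := h1 i
        rw [hdiv i] at h
        have hts : (0:ℝ) < (t:ℝ) * (s i : ℝ) := mul_pos htR (hsR i)
        constructor
        · have := h.1
          rw [le_div_iff₀ hts] at this
          linarith [this]
        · have := h.2
          rw [div_le_one hts] at this
          linarith [this]
      · intro i j hij
        have h := h2 i j hij
        rw [hdiv i, hdiv j,
          div_le_div_iff₀ (mul_pos htR (hsR i)) (mul_pos htR (hsR j))] at h
        nlinarith [htR, hsR i, hsR j]
    · rintro ⟨h1, h2⟩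
      constructor
      · intro i
        rw [hdiv i]
        have hts : (0:ℝ) < (t:ℝ) * (s i : ℝ) := mul_pos htR (hsR i)
        constructor
        · rw [le_div_iff₀ hts]; simpa using (h1 i).1
        · rw [div_le_one hts]; linarith [(h1 i).2]
      · intro i j hij
        rw [hdiv i, hdiv j,
          div_le_div_iff₀ (mul_pos htR (hsR i)) (mul_pos htR (hsR j))]
        nlinarith [h2 i j hij, htR]

def G (a t : ℕ) : Finset (ℕ×ℕ×ℕ) :=
  (Finset.range ((a+1)*t+1) ×ˢ Finset.range ((a+1)*t+1) ×ˢ Finset.range ((a+1)*t+1)).filter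
    (fun p => p.2.2 ≤ p.2.1 ∧ (a+1)*p.2.1 ≤ a*p.1)

lemma lh_set_eq (a : ℕ) (ha : 1 ≤ a) (t : ℕ) :
    {z : Fin 3 → ℤ | (fun i => (z i : ℝ)) ∈ ((t : ℝ) • lectureHall 3 ![a,a,a+1])} =
    (fun p : ℕ×ℕ×ℕ => ![(p.2.2 : ℤ), (p.2.1 : ℤ), (p.1 : ℤ)]) '' ↑(G a t) := by
  have hs : ∀ i, 0 < (![a,a,a+1] : Fin 3 → ℕ) i := by
    intro i; fin_cases i <;> simp <;> omega
  ext z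
  simp only [Set.mem_setOf_eq, mem_smul_lh _ hs t]
  constructor
  · rintro ⟨h1, h2⟩
    have hz0 : (0:ℤ) ≤ z 0 := by exact_mod_cast (h1 0).1
    have hz1 : (0:ℤ) ≤ z 1 := by exact_mod_cast (h1 1).1
    have hz2 : (0:ℤ) ≤ z 2 := by exact_mod_cast (h1 2).1
    have hb0 : z 0 ≤ (a:ℤ) * t := by
      have := (h1 0).2
      simp only [show (![a,a,a+1] : Fin 3 → ℕ) 0 = a from rfl] at this
      exact_mod_cast this
    have hb1 : z 1 ≤ (a:ℤ) * t := by
      have := (h1 1).2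
      simp only [show (![a,a,a+1] : Fin 3 → ℕ) 1 = a from rfl] at this
      exact_mod_cast this
    have hb2 : z 2 ≤ ((a:ℤ)+1) * t := by
      have := (h1 2).2
      simp only [show (![a,a,a+1] : Fin 3 → ℕ) 2 = a+1 from rfl] at this
      exact_mod_cast this
    have h01 : z 0 ≤ z 1 := by
      have := h2 0 1 (by decide)
      simp only [show (![a,a,a+1] : Fin 3 → ℕ) 0 = a from rfl,
        show (![a,a,a+1] : Fin 3 → ℕ) 1 = a from rfl] at this
      have hZ : z 0 * (a:ℤ) ≤ z 1 * (a:ℤ) := by exact_mod_cast this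
      have haZ : (0:ℤ) < (a:ℤ) := by exact_mod_cast ha
      exact le_of_mul_le_mul_right hZ haZ
    have h12 : ((a:ℤ)+1) * z 1 ≤ (a:ℤ) * z 2 := by
      have := h2 1 2 (by decide)
      simp only [show (![a,a,a+1] : Fin 3 → ℕ) 1 = a from rfl,
        show (![a,a,a+1] : Fin 3 → ℕ) 2 = a+1 from rfl] at this
      have hZ : z 1 * ((a:ℤ)+1) ≤ z 2 * (a:ℤ) := by exact_mod_cast this
      linarith [hZ]
    refine ⟨((z 2).toNat, (z 1).toNat, (z 0).toNat), ?_, ?_⟩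
    · simp only [G, Finset.coe_filter, Set.mem_setOf_eq, Finset.mem_product,
        Finset.mem_range]
      refine ⟨⟨?_, ?_, ?_⟩, ?_, ?_⟩
      · have : z 2 ≤ ((a+1)*t : ℕ) := by push_cast; linarith
        omega
      · have : z 1 ≤ ((a+1)*t : ℕ) := by push_cast; nlinarith [hz1]
        omega
      · have : z 0 ≤ ((a+1)*t : ℕ) := by push_cast; nlinarith [hz0]
        omega
      · omega
      · zify [Int.toNat_of_nonneg hz1, Int.toNat_of_nonneg hz2]
        push_cast
        linarith
    · funext i
      fin_cases i <;>
        simp [Int.toNat_of_nonneg hz0, Int.toNat_of_nonneg hz1, Int.toNat_of_nonneg hz2]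
  · rintro ⟨⟨c, y, x⟩, hp, rfl⟩
    simp only [G, Finset.coe_filter, Set.mem_setOf_eq, Finset.mem_product,
      Finset.mem_range] at hp
    obtain ⟨⟨hc, hy, hx⟩, hxy, hyc⟩ := hp
    have hyB : y ≤ a * t := by
      have h1 : (a+1)*y ≤ a*((a+1)*t) := le_trans hyc (Nat.mul_le_mul_left a (by omega))
      have h2 : a*((a+1)*t) = (a+1)*(a*t) := by ring
      rw [h2] at h1
      exact Nat.le_of_mul_le_mul_left h1 (by omega)
    have hxB : x ≤ a * t := le_trans hxy hyB
    constructor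
    · intro i
      fin_cases i <;> simp <;> push_cast
      · exact_mod_cast hxB
      · exact_mod_cast hyB
      · have : c ≤ (a+1)*t := by omega
        exact_mod_cast this
    · intro i j hij
      have c01 : x * a ≤ y * a := Nat.mul_le_mul hxy (le_refl a)
      have c02 : x * (a+1) ≤ c * a := by nlinarith
      have c12 : y * (a+1) ≤ c * a := by nlinarith
      fin_cases i <;> fin_cases j <;>
        (try exact absurd hij (by decide)) <;>
        simp <;>
        [exact_mod_cast c01; exact_mod_cast c02; exact_mod_cast c12]

lemma lhCount_eq (a : ℕ) (ha : 1 ≤ a) (t : ℕ) :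
    lhCount 3 ![a,a,a+1] t = (G a t).card := by
  have hinj : Function.Injective
      (fun p : ℕ×ℕ×ℕ => (![(p.2.2 : ℤ), (p.2.1 : ℤ), (p.1 : ℤ)] : Fin 3 → ℤ)) := by
    rintro ⟨c, y, x⟩ ⟨c', y', x'⟩ h
    have h0 := congrFun h 0
    have h1 := congrFun h 1
    have h2 := congrFun h 2
    simp at h0 h1 h2
    simp [Prod.ext_iff, h0, h1, h2]
  unfold lhCount
  rw [lh_set_eq a ha t, ← Finset.coe_image, Nat.card_coe_set_eq, Set.ncard_coe_finset,
    Finset.card_image_of_injective _ hinj]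



lemma count_le (y B : ℕ) (hyB : y ≤ B) :
    (∑ x ∈ Finset.range (B+1), if x ≤ y then 1 else 0) = y + 1 := by
  rw [← Finset.card_filter]
  have h : (Finset.range (B+1)).filter (fun x => x ≤ y) = Finset.range (y+1) := by
    ext x
    simp only [Finset.mem_filter, Finset.mem_range]
    omega
  rw [h, Finset.card_range]

lemma G_card (a t : ℕ) (ha : 1 ≤ a) : (G a t).card = NN a t := by
  unfold G NN
  rw [Finset.card_filter, Finset.sum_product]
  refine Finset.sum_congr rfl fun c hc => ?_
  rw [Finset.sum_product]
  have hcB : c ≤ (a+1)*t := by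
    have := Finset.mem_range.mp hc; omega
  have inner : ∀ y ∈ Finset.range ((a+1)*t+1),
      (∑ x ∈ Finset.range ((a+1)*t+1),
        if x ≤ y ∧ (a+1)*y ≤ a*c then (1:ℕ) else 0)
      = if (a+1)*y ≤ a*c then y+1 else 0 := by
    intro y hy
    have hyB : y ≤ (a+1)*t := by
      have := Finset.mem_range.mp hy; omega
    by_cases hP : (a+1)*y ≤ a*c
    · simp only [hP, and_true, if_true]
      exact count_le y _ hyB
    · simp [hP]
  rw [Finset.sum_congr rfl inner]
  unfold Scnt
  rw [Finset.sum_subset (Finset.range_subset_range.mpr (by omega : c+1 ≤ (a+1)*t+1))]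
  intro y hy hy'
  have h1 : c < y := by
    have h2 := Finset.mem_range.mp hy
    simp only [Finset.mem_range, not_lt] at hy'
    omega
  have : ¬ (a+1)*y ≤ a*c := by nlinarith
  simp [this]


/-- For `s = (a, a, a+1)` with `a ≥ 1`, the linear coefficient of the Ehrhart
polynomial of `P_3^s` is `(1/12)a² + (13/12)a + 1 > 0`, and `P_3^s` is Ehrhart positive. -/
theorem ehrhart_positive_n3 (a : ℕ) (ha : 1 ≤ a) (L : Polynomial ℚ)
    (hL : ∀ t : ℕ, L.eval (t : ℚ) = lhCount 3 ![a, a, a + 1] t) :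
    L.coeff 1 = (1 / 12) * (a : ℚ) ^ 2 + (13 / 12) * (a : ℚ) + 1 ∧
    0 < L.coeff 1 ∧ ∀ k, 0 ≤ L.coeff k := by
  have key' : ∀ t : ℕ, ((lhCount 3 ![a,a,a+1] t : ℕ) : ℚ) =
      (1/6*(a:ℚ)^3+1/6*(a:ℚ)^2)*t^3 + (3/4*(a:ℚ)^2+3/4*(a:ℚ))*t^2
        + (1/12*(a:ℚ)^2+13/12*(a:ℚ)+1)*t + 1 := fun t => by
    rw [lhCount_eq a ha t, G_card a t ha, key a ha t]
  have hLQ : L = C (1/6*(a:ℚ)^3+1/6*(a:ℚ)^2) * X^3 + C (3/4*(a:ℚ)^2+3/4*(a:ℚ)) * X^2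
      + C (1/12*(a:ℚ)^2+13/12*(a:ℚ)+1) * X + C 1 := by
    have hsub : L - (C (1/6*(a:ℚ)^3+1/6*(a:ℚ)^2) * X^3 + C (3/4*(a:ℚ)^2+3/4*(a:ℚ)) * X^2
        + C (1/12*(a:ℚ)^2+13/12*(a:ℚ)+1) * X + C 1) = 0 := by
      apply Polynomial.eq_zero_of_infinite_isRoot
      refine Set.Infinite.mono ?_
        (Set.infinite_range_of_injective
          (f := fun n : ℕ => (n : ℚ)) Nat.cast_injective)
      rintro _ ⟨t, rfl⟩
      simp only [Set.mem_setOf_eq, Polynomial.IsRoot, Polynomial.eval_sub,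
        Polynomial.eval_add, Polynomial.eval_mul, Polynomial.eval_pow,
        Polynomial.eval_C, Polynomial.eval_X, hL t, key' t]
      ring
    exact sub_eq_zero.mp hsub
  have ha0 : (0:ℚ) ≤ (a:ℚ) := Nat.cast_nonneg a
  have hc1 : L.coeff 1 = 1/12*(a:ℚ)^2+13/12*(a:ℚ)+1 := by
    rw [hLQ]
    simp only [coeff_add, coeff_C_mul, coeff_X_pow, coeff_X_one, coeff_C,
      mul_one, mul_zero, if_neg (by omega : ¬(1:ℕ) = 3), if_neg (by omega : ¬(1:ℕ) = 2),
      if_neg (by omega : ¬(1:ℕ) = 0), add_zero, zero_add]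
  refine ⟨hc1, by rw [hc1]; positivity, ?_⟩
  intro k
  rw [hLQ]
  match k with
  | 0 =>
    simp [coeff_add, coeff_C_mul, coeff_X_pow, coeff_C, coeff_one]
  | 1 =>
    simp only [coeff_add, coeff_C_mul, coeff_X_pow, coeff_C, coeff_X_one, coeff_one,
      mul_one, mul_zero, if_neg (by omega : ¬(1:ℕ) = 3), if_neg (by omega : ¬(1:ℕ) = 2),
      if_neg (by omega : ¬(1:ℕ) = 0), add_zero, zero_add, mul_ite]
    positivity
  | 2 =>
    simp only [coeff_add, coeff_C_mul, coeff_X_pow, coeff_C, coeff_X, coeff_one,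
      mul_one, mul_zero, if_neg (by omega : ¬(2:ℕ) = 3), if_pos rfl,
      if_neg (by omega : ¬(2:ℕ) = 0), if_neg (by omega : ¬(1:ℕ) = 2), add_zero, zero_add]
    positivity
  | 3 =>
    simp only [coeff_add, coeff_C_mul, coeff_X_pow, coeff_C, coeff_X, coeff_one,
      mul_one, mul_zero, if_pos rfl, if_neg (by omega : ¬(3:ℕ) = 2),
      if_neg (by omega : ¬(3:ℕ) = 0), if_neg (by omega : ¬(1:ℕ) = 3), add_zero, zero_add]
    positivity
  | (n+4) =>
    simp only [coeff_add, coeff_C_mul, coeff_X_pow, coeff_C, coeff_X, coeff_one,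
      mul_one, mul_zero, if_neg (by omega : ¬(n+4 = 3)), if_neg (by omega : ¬(n+4 = 2)),
      if_neg (by omega : ¬(n+4 = 0)), if_neg (by omega : ¬(1 = n+4)), add_zero, zero_add]
    exact le_refl 0
end

section
/- Let s = (a, a, a, a+1) with a ≥ 1. Then in the Ehrhart polynomial of P_4^s, the coefficient of t equals (1/6)a² + (7/6)a + 1 and the coefficient of t² equals (1/24)a³ + (23/24)a² + (11/12)a; both are nonnegative for a ≥ 1, hence P_4^s is Ehrhart positive. -/
set_option maxHeartbeats 2000000

open Finset Pointwise Polynomial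

/-- hockey stick -/
lemma hs (r : ℕ) : ∀ (k m : ℕ),
    ∑ j ∈ Finset.range k, (m + j + r).choose r + (m + r).choose (r + 1)
      = (m + k + r).choose (r + 1) := by
  intro k m
  induction k with
  | zero => simp
  | succ k ih =>
    rw [Finset.sum_range_succ]
    have h := Nat.choose_succ_succ (m + k + r) r
    simp only [Nat.succ_eq_add_one] at h
    have e : m + (k+1) + r = (m + k + r) + 1 := by omega
    rw [e, h]
    omega

lemma choose4' (n : ℕ) : (((n + 3).choose 4 : ℕ) : ℚ)
    = n * (n + 1) * (n + 2) * (n + 3) / 24 := by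
  match n with
  | 0 => norm_num
  | (m+1) =>
    have h4 : 4 ≤ m + 1 + 3 := by omega
    have h := Nat.choose_mul_factorial_mul_factorial h4
    have e : m + 1 + 3 - 4 = m := by omega
    rw [e] at h
    have hm : (0:ℚ) < (Nat.factorial m : ℚ) := by exact_mod_cast Nat.factorial_pos m
    have hq : ((m+1+3).choose 4 : ℚ) * 24 * (Nat.factorial m : ℚ) = (Nat.factorial (m+4) : ℚ) := by
      exact_mod_cast congrArg (Nat.cast (R := ℚ)) h
    have hfac : (Nat.factorial (m+4) : ℚ)
        = (m+4) * (m+3) * (m+2) * (m+1) * (Nat.factorial m : ℚ) := by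
      rw [show m+4 = (m+3)+1 by ring, Nat.factorial_succ]
      rw [show m+3 = (m+2)+1 by ring, Nat.factorial_succ]
      rw [show m+2 = (m+1)+1 by ring, Nat.factorial_succ]
      rw [show m+1 = m+1 by ring, Nat.factorial_succ]
      push_cast; ring
    rw [hfac] at hq
    have : ((m+1+3).choose 4 : ℚ) * 24 = (m+4) * (m+3) * (m+2) * (m+1) := by
      have := mul_right_cancel₀ (ne_of_gt hm) hq
      linarith [this]
    push_cast
    linarith [this]

noncomputable def Nfun (a t : ℕ) : ℕ :=
  ∑ w ∈ Finset.range ((a+1)*t+1), (a*w/(a+1)+3).choose 3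

noncomputable def qp (a : ℕ) (t : ℚ) : ℚ :=
  1 + (1 + 7/6*a + 1/6*a^2) * t + (11/12*a + 23/24*a^2 + 1/24*a^3) * t^2
    + (1/3*a^2 + 1/3*a^3) * t^3 + (1/24*a^3 + 1/24*a^4) * t^4

lemma div_step (a t j : ℕ) (hj : j ≤ a) :
    a * ((a+1)*t + 1 + j) / (a+1) = a*t + j := by
  obtain ⟨k, hk⟩ := Nat.exists_eq_add_of_le hj
  subst hk
  have e : (j+k) * ((j+k+1)*t + 1 + j) = k + (((j+k)*t + j) * (j+k+1)) := by ring
  rw [e, Nat.add_mul_div_right _ _ (by omega : 0 < j+k+1), Nat.div_eq_of_lt (by omega)]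
  omega

lemma Nfun_rec (a t : ℕ) :
    Nfun a (t+1) + (a*t+3).choose 4 = Nfun a t + (a*t + (a+1) + 3).choose 4 := by
  unfold Nfun
  have e : (a+1)*(t+1)+1 = ((a+1)*t+1) + (a+1) := by ring
  rw [e, Finset.sum_range_add]
  have hsum : ∑ j ∈ Finset.range (a+1), (a*((a+1)*t+1+j)/(a+1)+3).choose 3
      = ∑ j ∈ Finset.range (a+1), (a*t + j + 3).choose 3 := by
    apply Finset.sum_congr rfl
    intro j hj
    rw [div_step a t j (by simp at hj; omega)]
  rw [hsum]
  have h2 := hs 3 (a+1) (a*t)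
  norm_num at h2
  omega

lemma Nfun_cast (a t : ℕ) : ((Nfun a t : ℕ) : ℚ) = qp a t := by
  induction t with
  | zero =>
    unfold Nfun qp
    norm_num
  | succ t ih =>
    have h := Nfun_rec a t
    have hq : ((Nfun a (t+1) : ℕ) : ℚ) + ((a*t+3).choose 4 : ℚ)
        = ((Nfun a t : ℕ) : ℚ) + ((a*t + (a+1) + 3).choose 4 : ℚ) := by
      exact_mod_cast congrArg (Nat.cast (R := ℚ)) h
    have c1 : (((a*t+3).choose 4 : ℕ) : ℚ)
        = (a*t) * (a*t+1) * (a*t+2) * (a*t+3) / 24 := by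
      have := choose4' (a*t); push_cast at this ⊢; linarith
    have c2 : (((a*t+(a+1)+3).choose 4 : ℕ) : ℚ)
        = (a*t+a+1) * (a*t+a+2) * (a*t+a+3) * (a*t+a+4) / 24 := by
      have := choose4' (a*t+a+1)
      rw [show a*t+(a+1)+3 = (a*t+a+1)+3 by ring]
      push_cast at this ⊢; linarith
    rw [c1, c2, ih] at hq
    unfold qp at hq ⊢
    push_cast at hq ⊢
    ring_nf at hq ⊢
    linarith

lemma mem_char (a : ℕ) (ha : 1 ≤ a) (t : ℕ) (ht : 0 < t) (z : Fin 4 → ℤ) :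
    ((fun i => (z i : ℝ)) ∈ ((t : ℝ) • lectureHall 4 ![a, a, a, a + 1])) ↔
    (0 ≤ z 0 ∧ z 0 ≤ z 1 ∧ z 1 ≤ z 2 ∧ (a+1) * z 2 ≤ a * z 3 ∧ z 3 ≤ (a+1) * t) := by
  have htR : (0:ℝ) < t := by exact_mod_cast ht
  have haR : (0:ℝ) < a := by exact_mod_cast ha
  have ha1R : (0:ℝ) < (a:ℝ) + 1 := by linarith
  rw [Set.mem_smul_set_iff_inv_smul_mem₀ (ne_of_gt htR)]
  simp only [lectureHall, Set.mem_setOf_eq, Pi.smul_apply, smul_eq_mul,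
    inv_mul_eq_div, div_div]
  constructor
  · rintro ⟨hb, hc⟩
    have h0 := (hb 0).1
    have h3 := (hb 3).2
    have h01 := hc 0 1 (by decide)
    have h12 := hc 1 2 (by decide)
    have h23 := hc 2 3 (by decide)
    simp only [show ((![a,a,a,a+1] 0 : ℕ) : ℝ) = a from by norm_num,
      show ((![a,a,a,a+1] 1 : ℕ) : ℝ) = a from by norm_num,
      show ((![a,a,a,a+1] 2 : ℕ) : ℝ) = a from by rfl,
      show ((![a,a,a,a+1] 3 : ℕ) : ℝ) = (a:ℝ)+1 from by rw [show (![a,a,a,a+1] 3 : ℕ) = a+1 from rfl]; push_cast; rfl] at h0 h3 h01 h12 h23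
    rw [le_div_iff₀ (by positivity)] at h0
    rw [div_le_one (by positivity)] at h3
    rw [div_le_div_iff₀ (by positivity) (by positivity)] at h01 h12 h23
    refine ⟨?_, ?_, ?_, ?_, ?_⟩
    · exact_mod_cast show (0:ℝ) ≤ z 0 by nlinarith [mul_pos htR haR]
    · exact_mod_cast show ((z 0:ℝ)) ≤ z 1 by nlinarith [mul_pos htR haR]
    · exact_mod_cast show ((z 1:ℝ)) ≤ z 2 by nlinarith [mul_pos htR haR]
    · exact_mod_cast show ((a:ℝ)+1) * z 2 ≤ a * z 3 by nlinarith [htR]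
    · exact_mod_cast show ((z 3:ℝ)) ≤ ((a:ℝ)+1) * t by nlinarith
  · rintro ⟨h0, h01, h12, h23, h3⟩
    have H0 : (0:ℝ) ≤ (z 0 : ℝ) := by exact_mod_cast h0
    have H01 : (z 0 : ℝ) ≤ (z 1 : ℝ) := by exact_mod_cast h01
    have H12 : (z 1 : ℝ) ≤ (z 2 : ℝ) := by exact_mod_cast h12
    have H23 : ((a:ℝ)+1) * (z 2 : ℝ) ≤ (a:ℝ) * (z 3 : ℝ) := by exact_mod_cast h23
    have H3 : (z 3 : ℝ) ≤ ((a:ℝ)+1) * (t:ℝ) := by exact_mod_cast h3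
    have H1 : (0:ℝ) ≤ (z 1 : ℝ) := le_trans H0 H01
    have H2 : (0:ℝ) ≤ (z 2 : ℝ) := le_trans H1 H12
    have Hz3 : (0:ℝ) ≤ (z 3 : ℝ) := by nlinarith
    have H2t : (z 2 : ℝ) ≤ (a:ℝ) * t := by nlinarith
    have H03 : ((a:ℝ)+1) * (z 0 : ℝ) ≤ (a:ℝ) * (z 3 : ℝ) := by nlinarith
    have H13 : ((a:ℝ)+1) * (z 1 : ℝ) ≤ (a:ℝ) * (z 3 : ℝ) := by nlinarith
    constructor
    · intro i
      fin_cases i <;>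
        simp only [show ((⟨0, by norm_num⟩ : Fin 4)) = 0 from rfl,
          show ((⟨1, by norm_num⟩ : Fin 4)) = 1 from rfl,
          show ((⟨2, by norm_num⟩ : Fin 4)) = 2 from rfl,
          show ((⟨3, by norm_num⟩ : Fin 4)) = 3 from rfl] <;>
        simp only [show ((![a,a,a,a+1] 0 : ℕ) : ℝ) = (a:ℝ) from by norm_num,
          show ((![a,a,a,a+1] 1 : ℕ) : ℝ) = (a:ℝ) from by norm_num,
          show ((![a,a,a,a+1] 2 : ℕ) : ℝ) = (a:ℝ) from by rfl,
          show ((![a,a,a,a+1] 3 : ℕ) : ℝ) = (a:ℝ)+1 from by rw [show (![a,a,a,a+1] 3 : ℕ) = a+1 from rfl]; push_cast; rfl] <;>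
        refine ⟨div_nonneg (by linarith) (by positivity), ?_⟩ <;>
        rw [div_le_one (by positivity)] <;> nlinarith
    · intro i j hij
      fin_cases i <;> fin_cases j <;>
        first
          | exact le_rfl
          | exact absurd hij (by decide)
          | (simp only [show ((⟨0, by norm_num⟩ : Fin 4)) = 0 from rfl,
          show ((⟨1, by norm_num⟩ : Fin 4)) = 1 from rfl,
          show ((⟨2, by norm_num⟩ : Fin 4)) = 2 from rfl,
          show ((⟨3, by norm_num⟩ : Fin 4)) = 3 from rfl]
             simp only [show ((![a,a,a,a+1] 0 : ℕ) : ℝ) = (a:ℝ) from by norm_num,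
          show ((![a,a,a,a+1] 1 : ℕ) : ℝ) = (a:ℝ) from by norm_num,
          show ((![a,a,a,a+1] 2 : ℕ) : ℝ) = (a:ℝ) from by rfl,
          show ((![a,a,a,a+1] 3 : ℕ) : ℝ) = (a:ℝ)+1 from by rw [show (![a,a,a,a+1] 3 : ℕ) = a+1 from rfl]; push_cast; rfl]
             rw [div_le_div_iff₀ (by positivity) (by positivity)]
             nlinarith [mul_pos htR haR, htR])

def Tset (a t : ℕ) : Finset (Σ _ : ℕ, Σ _ : ℕ, Σ _ : ℕ, ℕ) :=
  (Finset.range ((a+1)*t+1)).sigma (fun w =>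
    (Finset.range (a*w/(a+1)+1)).sigma (fun c =>
      (Finset.range (c+1)).sigma (fun b => Finset.range (b+1))))

def Ffun (p : Σ _ : ℕ, Σ _ : ℕ, Σ _ : ℕ, ℕ) : Fin 4 → ℤ :=
  ![(p.2.2.2 : ℤ), (p.2.2.1 : ℤ), (p.2.1 : ℤ), (p.1 : ℤ)]

lemma Ffun_inj : Function.Injective Ffun := by
  rintro ⟨w1, c1, b1, d1⟩ ⟨w2, c2, b2, d2⟩ h
  have e0 := congrFun h 0
  have e1 := congrFun h 1
  have e2 := congrFun h 2
  have e3 := congrFun h 3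
  simp [Ffun] at e0 e1 e2 e3
  subst e0; subst e1; subst e2; subst e3; rfl

lemma count_pos (a : ℕ) (ha : 1 ≤ a) (t : ℕ) (ht : 0 < t) :
    lhCount 4 ![a, a, a, a + 1] t = (Tset a t).card := by
  have hset : {z : Fin 4 → ℤ | (fun i => (z i : ℝ)) ∈ ((t : ℝ) • lectureHall 4 ![a, a, a, a + 1])}
      = ↑((Tset a t).image Ffun) := by
    ext z
    simp only [Set.mem_setOf_eq, mem_char a ha t ht, Finset.coe_image, Set.mem_image,
      Finset.mem_coe]
    constructor
    · rintro ⟨h0, h01, h12, h23, h3⟩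
      have hz1 : 0 ≤ z 1 := le_trans h0 h01
      have hz2 : 0 ≤ z 2 := le_trans hz1 h12
      have hz3 : 0 ≤ z 3 := by nlinarith
      have hb3 : z 3 ≤ (((a+1)*t : ℕ) : ℤ) := by push_cast; linarith
      refine ⟨⟨(z 3).toNat, (z 2).toNat, (z 1).toNat, (z 0).toNat⟩, ?_, ?_⟩
      · simp only [Tset, Finset.mem_sigma, Finset.mem_range]
        refine ⟨by omega, ?_, by omega, by omega⟩
        rw [Nat.lt_succ_iff, Nat.le_div_iff_mul_le (by omega)]
        zify
        rw [Int.toNat_of_nonneg hz2, Int.toNat_of_nonneg hz3]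
        push_cast
        linarith
      · funext i
        fin_cases i <;>
          simp [Ffun, Int.toNat_of_nonneg, h0, hz1, hz2, hz3]
    · rintro ⟨⟨w, c, b, d⟩, hp, rfl⟩
      simp only [Tset, Finset.mem_sigma, Finset.mem_range] at hp
      obtain ⟨hw, hc, hb, hd⟩ := hp
      have hcw : (a+1) * c ≤ a * w := by
        rw [Nat.lt_succ_iff, Nat.le_div_iff_mul_le (by omega)] at hc
        linarith [mul_comm (a+1) c, hc]
      refine ⟨by simp [Ffun], by simp [Ffun]; omega, by simp [Ffun]; omega, ?_, ?_⟩
      · show (a+1) * ((c : ℤ)) ≤ a * ((w : ℤ))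
        exact_mod_cast hcw
      · show ((w : ℤ)) ≤ (a+1) * t
        exact_mod_cast by omega
  unfold lhCount
  rw [hset, Nat.card_coe_set_eq, Set.ncard_coe_finset,
    Finset.card_image_of_injective _ Ffun_inj]

lemma Tcard (a t : ℕ) : (Tset a t).card = Nfun a t := by
  have inner1 : ∀ c : ℕ, ∑ b ∈ Finset.range (c+1), (b+1) = (c+2).choose 2 := by
    intro c
    have h := hs 1 (c+1) 0
    simp only [Nat.choose_one_right, zero_add] at h
    simpa using h
  have inner2 : ∀ m : ℕ, ∑ c ∈ Finset.range (m+1), (c+2).choose 2 = (m+3).choose 3 := by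
    intro m
    have h := hs 2 (m+1) 0
    norm_num at h
    convert h using 2 <;> omega
  unfold Tset Nfun
  rw [Finset.card_sigma]
  apply Finset.sum_congr rfl
  intro w _
  rw [Finset.card_sigma]
  calc ∑ c ∈ Finset.range (a*w/(a+1)+1),
        ((Finset.range (c+1)).sigma (fun b => Finset.range (b+1))).card
      = ∑ c ∈ Finset.range (a*w/(a+1)+1), (c+2).choose 2 := by
        apply Finset.sum_congr rfl
        intro c _
        rw [Finset.card_sigma]
        simp only [Finset.card_range]
        exact inner1 c
    _ = (a*w/(a+1)+3).choose 3 := inner2 _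

lemma count_zero (a : ℕ) (ha : 1 ≤ a) : lhCount 4 ![a, a, a, a + 1] 0 = 1 := by
  have hne : (lectureHall 4 ![a, a, a, a + 1]).Nonempty := by
    refine ⟨0, ⟨?_, ?_⟩⟩
    · intro i; simp
    · intro i j _; simp
  have hz : ((0:ℕ) : ℝ) = (0:ℝ) := by norm_num
  have hsmul : ((0:ℝ)) • lectureHall 4 ![a, a, a, a + 1] = 0 := Set.zero_smul_set hne
  have hset : {z : Fin 4 → ℤ | (fun i => (z i : ℝ)) ∈ (((0:ℕ) : ℝ) • lectureHall 4 ![a, a, a, a + 1])}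
      = {0} := by
    ext z
    rw [Set.mem_setOf_eq, hz, hsmul]
    simp only [Set.mem_zero, Set.mem_singleton_iff]
    constructor
    · intro h
      funext i
      have := congrFun h i
      simpa using this
    · rintro rfl
      funext i
      simp
  unfold lhCount
  rw [hset]
  simp

lemma count_eq (a : ℕ) (ha : 1 ≤ a) (t : ℕ) :
    lhCount 4 ![a, a, a, a + 1] t = Nfun a t := by
  rcases Nat.eq_zero_or_pos t with rfl | ht
  · rw [count_zero a ha]
    unfold Nfun
    norm_num
  · rw [count_pos a ha t ht, Tcard]

noncomputable def QQ (a : ℕ) : Polynomial ℚ :=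
  C 1 + C (1 + 7/6*(a:ℚ) + 1/6*(a:ℚ)^2) * X^1
    + C (11/12*(a:ℚ) + 23/24*(a:ℚ)^2 + 1/24*(a:ℚ)^3) * X^2
    + C (1/3*(a:ℚ)^2 + 1/3*(a:ℚ)^3) * X^3
    + C (1/24*(a:ℚ)^3 + 1/24*(a:ℚ)^4) * X^4

/-- For `s = (a, a, a, a + 1)` the Ehrhart polynomial has the stated coefficients. -/
theorem ehrhart_positive_n4 (a : ℕ) (ha : 1 ≤ a) (L : Polynomial ℚ)
    (hL : ∀ t : ℕ, L.eval (t : ℚ) = lhCount 4 ![a, a, a, a + 1] t) :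
    L.coeff 1 = (1 / 6) * (a : ℚ) ^ 2 + (7 / 6) * (a : ℚ) + 1 ∧
    L.coeff 2 = (1 / 24) * (a : ℚ) ^ 3 + (23 / 24) * (a : ℚ) ^ 2 + (11 / 12) * (a : ℚ) ∧
    0 ≤ L.coeff 1 ∧ 0 ≤ L.coeff 2 ∧ ∀ k, 0 ≤ L.coeff k := by
  have hLQ : L = QQ a := by
    apply Polynomial.eq_of_infinite_eval_eq
    apply Set.infinite_of_injective_forall_mem
      (f := fun n : ℕ => (n : ℚ)) (hi := fun m n h => Nat.cast_injective h)
    intro n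
    simp only [Set.mem_setOf_eq]
    rw [hL n, count_eq a ha n, Nfun_cast a n]
    unfold qp
    simp only [QQ, eval_add, eval_mul, eval_pow, eval_C, eval_X, eval_one]
    try ring
  subst hLQ
  have hc1 : (QQ a).coeff 1 = 1 + 7/6*(a:ℚ) + 1/6*(a:ℚ)^2 := by
    simp only [QQ, coeff_add, coeff_C_mul, coeff_X_pow, coeff_C]; norm_num
  have hc2 : (QQ a).coeff 2 = 11/12*(a:ℚ) + 23/24*(a:ℚ)^2 + 1/24*(a:ℚ)^3 := by
    simp only [QQ, coeff_add, coeff_C_mul, coeff_X_pow, coeff_C]; norm_num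
  refine ⟨by rw [hc1]; ring, by rw [hc2]; ring, by rw [hc1]; positivity, by rw [hc2]; positivity, ?_⟩
  intro k
  match k with
  | 0 => simp only [QQ, coeff_add, coeff_C_mul, coeff_X_pow, coeff_C]; norm_num
  | 1 => rw [hc1]; positivity
  | 2 => rw [hc2]; positivity
  | 3 =>
    have : (QQ a).coeff 3 = 1/3*(a:ℚ)^2 + 1/3*(a:ℚ)^3 := by
      simp only [QQ, coeff_add, coeff_C_mul, coeff_X_pow, coeff_C]; norm_num
    rw [this]; positivity
  | 4 =>
    have : (QQ a).coeff 4 = 1/24*(a:ℚ)^3 + 1/24*(a:ℚ)^4 := by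
      simp only [QQ, coeff_add, coeff_C_mul, coeff_X_pow, coeff_C]; norm_num
    rw [this]; positivity
  | (n+5) =>
    have : (QQ a).coeff (n+5) = 0 := by
      simp only [QQ, coeff_add, coeff_C_mul, coeff_X_pow, coeff_C]
      rw [if_neg (by omega), if_neg (by omega), if_neg (by omega), if_neg (by omega), if_neg (by omega)]
      ring
    rw [this]
end

section
/- For s = (a,...,a,a+1) of length 5 and a = 16, the Ehrhart polynomial of P_5^s is (139264/15)t^5 + (21760/3)t^4 + (9248/3)t^3 + (2210/3)t^2 − (119/15)t + 1; in particular the linear coefficient is negative, so P_5^s is not Ehrhart positive. -/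
open Finset Pointwise Polynomial

def Spred (t : ℕ) (z : Fin 5 → ℤ) : Prop :=
  0 ≤ z 0 ∧ z 0 ≤ z 1 ∧ z 1 ≤ z 2 ∧ z 2 ≤ z 3 ∧ 17 * z 3 ≤ 16 * z 4 ∧ z 4 ≤ 17 * t

lemma lh_mem_iff (t : ℕ) (ht : 0 < t) (z : Fin 5 → ℤ) :
    ((fun i => (z i : ℝ)) ∈ ((t : ℝ) • lectureHall 5 ![16,16,16,16,17])) ↔ Spred t z := by
  have htR : (0:ℝ) < t := by exact_mod_cast ht
  have hinv : (0:ℝ) < (t:ℝ)⁻¹ := inv_pos.mpr htR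
  rw [Set.mem_smul_set_iff_inv_smul_mem₀ (ne_of_gt htR)]
  simp only [lectureHall, Set.mem_setOf_eq, Pi.smul_apply, smul_eq_mul]
  constructor
  · rintro ⟨h1, h2⟩
    have h00 := (h1 0).1
    have h44 := (h1 4).2
    have h01 := h2 0 1 (by decide)
    have h12 := h2 1 2 (by decide)
    have h23 := h2 2 3 (by decide)
    have h34 := h2 3 4 (by decide)
    simp only [Matrix.cons_val_zero, Matrix.cons_val_one, Matrix.head_cons,
      Matrix.cons_val_two, Matrix.tail_cons, Matrix.cons_val_three, Matrix.cons_val_four,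
      Nat.cast_ofNat] at h00 h44 h01 h12 h23 h34
    rw [div_le_one (by norm_num), inv_mul_le_iff₀ htR] at h44
    rw [div_le_div_iff_of_pos_right (by norm_num : (0:ℝ) < 16)] at h01 h12 h23
    rw [div_le_div_iff₀ (by norm_num : (0:ℝ) < 16) (by norm_num : (0:ℝ) < 17)] at h34
    refine ⟨?_, ?_, ?_, ?_, ?_, ?_⟩
    · have : (0:ℝ) ≤ z 0 := by nlinarith
      exact_mod_cast this
    · have : (z 0 : ℝ) ≤ z 1 := le_of_mul_le_mul_left h01 hinv
      exact_mod_cast this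
    · have : (z 1 : ℝ) ≤ z 2 := le_of_mul_le_mul_left h12 hinv
      exact_mod_cast this
    · have : (z 2 : ℝ) ≤ z 3 := le_of_mul_le_mul_left h23 hinv
      exact_mod_cast this
    · have : 17 * (z 3 : ℝ) ≤ 16 * z 4 := by
        have : (t:ℝ)⁻¹ * (17 * z 3) ≤ (t:ℝ)⁻¹ * (16 * z 4) := by nlinarith
        exact le_of_mul_le_mul_left this hinv
      exact_mod_cast this
    · have : (z 4 : ℝ) ≤ 17 * t := by linarith
      exact_mod_cast this
  · rintro ⟨p0, p1, p2, p3, p4, p5⟩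
    have r0 : (0:ℝ) ≤ z 0 := by exact_mod_cast p0
    have r1 : (z 0:ℝ) ≤ z 1 := by exact_mod_cast p1
    have r2 : (z 1:ℝ) ≤ z 2 := by exact_mod_cast p2
    have r3 : (z 2:ℝ) ≤ z 3 := by exact_mod_cast p3
    have r4 : 17 * (z 3:ℝ) ≤ 16 * z 4 := by exact_mod_cast p4
    have r5 : (z 4:ℝ) ≤ 17 * t := by exact_mod_cast p5
    constructor
    · intro i
      fin_cases i <;> simp <;>
        refine ⟨?_, ?_⟩ <;>
        (first
          | (apply div_nonneg (mul_nonneg hinv.le ?_) (by norm_num); linarith)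
          | (rw [div_le_one (by norm_num), inv_mul_le_iff₀ htR]; linarith))
    · have key : ∀ A B : ℝ, ∀ cA cB : ℝ, 0 < cA → 0 < cB → cB * A ≤ cA * B →
          (t:ℝ)⁻¹ * A / cA ≤ (t:ℝ)⁻¹ * B / cB := by
        intro A B cA cB hcA hcB hAB
        rw [div_le_div_iff₀ hcA hcB]
        nlinarith [mul_nonneg hinv.le (sub_nonneg.mpr hAB)]
      have q1 : (t:ℝ)⁻¹ * (z 0 : ℝ) / 16 ≤ (t:ℝ)⁻¹ * (z 1 : ℝ) / 16 :=
        key _ _ _ _ (by norm_num) (by norm_num) (by linarith)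
      have q2 : (t:ℝ)⁻¹ * (z 1 : ℝ) / 16 ≤ (t:ℝ)⁻¹ * (z 2 : ℝ) / 16 :=
        key _ _ _ _ (by norm_num) (by norm_num) (by linarith)
      have q3 : (t:ℝ)⁻¹ * (z 2 : ℝ) / 16 ≤ (t:ℝ)⁻¹ * (z 3 : ℝ) / 16 :=
        key _ _ _ _ (by norm_num) (by norm_num) (by linarith)
      have q4 : (t:ℝ)⁻¹ * (z 3 : ℝ) / 16 ≤ (t:ℝ)⁻¹ * (z 4 : ℝ) / 17 :=
        key _ _ _ _ (by norm_num) (by norm_num) (by linarith)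
      intro i j hij
      fin_cases i <;> fin_cases j <;> simp <;>
        first
          | exact absurd hij (by decide)
          | linarith [q1, q2, q3, q4]

def c2' (b : ℕ) : ℕ := ∑ c ∈ range (b+1), (c+1)

def Dtype (t : ℕ) : Type :=
  Σ m : Fin (17*t+1), Σ a : Fin (16*(m:ℕ)/17+1), Σ b : Fin ((a:ℕ)+1), Σ c : Fin ((b:ℕ)+1),
    Fin ((c:ℕ)+1)

instance (t : ℕ) : Fintype (Dtype t) := by unfold Dtype; infer_instance

def sEquiv (t : ℕ) : {z : Fin 5 → ℤ // Spred t z} ≃ Dtype t where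
  toFun z :=
    ⟨⟨(z.1 4).toNat, by have h := z.2; unfold Spred at h; omega⟩,
     ⟨(z.1 3).toNat, by
        have h := z.2; unfold Spred at h
        show (z.1 3).toNat < 16 * (z.1 4).toNat / 17 + 1
        omega⟩,
     ⟨(z.1 2).toNat, by
        have h := z.2; unfold Spred at h
        show (z.1 2).toNat < (z.1 3).toNat + 1
        omega⟩,
     ⟨(z.1 1).toNat, by
        have h := z.2; unfold Spred at h
        show (z.1 1).toNat < (z.1 2).toNat + 1
        omega⟩,
     ⟨(z.1 0).toNat, by
        have h := z.2; unfold Spred at h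
        show (z.1 0).toNat < (z.1 1).toNat + 1
        omega⟩⟩
  invFun w :=
    ⟨![(w.2.2.2.2 : ℕ), (w.2.2.2.1 : ℕ), (w.2.2.1 : ℕ), (w.2.1 : ℕ), (w.1 : ℕ)], by
      obtain ⟨m, a, b, c, d⟩ := w
      have hm := m.isLt
      have ha := a.isLt
      have hb := b.isLt
      have hc := c.isLt
      have hd := d.isLt
      refine ⟨?_, ?_, ?_, ?_, ?_, ?_⟩ <;> simp <;> omega⟩
  left_inv := by
    rintro ⟨z, hz⟩
    obtain ⟨h0, h1, h2, h3, h4, h5⟩ := hz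
    ext i
    fin_cases i <;> simp <;> omega
  right_inv := by
    rintro ⟨m, a, b, c, d⟩
    simp [Dtype]

def c3' (a : ℕ) : ℕ := ∑ b ∈ range (a+1), c2' b
def c4' (B : ℕ) : ℕ := ∑ a ∈ range (B+1), c3' a
def Fcount (t : ℕ) : ℕ := ∑ m ∈ range (17*t+1), c4' (16*m/17)

lemma card_D (t : ℕ) : Fintype.card (Dtype t) = Fcount t := by
  have e2 : ∀ n : ℕ, (∑ x : Fin (n+1), ((x:ℕ)+1)) = c2' n := fun n =>
    Fin.sum_univ_eq_sum_range (fun v => v+1) (n+1)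
  have e3 : ∀ n : ℕ, (∑ x : Fin (n+1), c2' (x:ℕ)) = c3' n := fun n => by
    rw [c3', ← Fin.sum_univ_eq_sum_range]
  have e4 : ∀ n : ℕ, (∑ x : Fin (n+1), c3' (x:ℕ)) = c4' n := fun n => by
    rw [c4', ← Fin.sum_univ_eq_sum_range]
  simp only [Dtype, Fintype.card_sigma, Fintype.card_fin]
  simp only [e2, e3, e4]
  rw [Fcount, ← Fin.sum_univ_eq_sum_range]

lemma lhCount_eq_s12 (t : ℕ) : lhCount 5 ![16,16,16,16,17] t = Fcount t := by
  rcases Nat.eq_zero_or_pos t with rfl | ht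
  · have hset : {z : Fin 5 → ℤ | (fun i => (z i : ℝ)) ∈ ((0:ℕ) : ℝ) • lectureHall 5 ![16,16,16,16,17]}
        = {0} := by
      have hne : (lectureHall 5 ![16,16,16,16,17]).Nonempty := by
        refine ⟨0, ?_, ?_⟩ <;> intros <;> simp
      ext z
      rw [Set.mem_setOf_eq, Nat.cast_zero, Set.zero_smul_set hne]
      constructor
      · intro hz
        have h0 : (fun i => (z i : ℝ)) = 0 := hz
        have : z = 0 := by
          funext i
          have := congrFun h0 i
          simpa using this
        simpa using this
      · intro hz
        have : z = 0 := hz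
        subst this
        show (fun i => ((0:ℤ):ℝ)) ∈ (0 : Set (Fin 5 → ℝ))
        simp
        rfl
    rw [lhCount, hset]
    simp
    decide
  · rw [lhCount]
    have hset : {z : Fin 5 → ℤ | (fun i => (z i : ℝ)) ∈ (t : ℝ) • lectureHall 5 ![16,16,16,16,17]}
        = {z | Spred t z} := by
      ext z; exact lh_mem_iff t ht z
    rw [hset, ← card_D t, ← Nat.card_eq_fintype_card]
    exact Nat.card_congr (sEquiv t)

def Reval (t : ℚ) : ℚ :=
  (139264/15)*t^5 + (21760/3)*t^4 + (9248/3)*t^3 + (2210/3)*t^2 - (119/15)*t + 1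

lemma c2'_cast (b : ℕ) : (c2' b : ℚ) = (b+1)*(b+2)/2 := by
  induction b with
  | zero => norm_num [c2']
  | succ b ih =>
    rw [c2', Finset.sum_range_succ, ← c2']
    push_cast [ih]; ring

lemma c3'_cast (a : ℕ) : (c3' a : ℚ) = (a+1)*(a+2)*(a+3)/6 := by
  induction a with
  | zero => norm_num [c3', c2']
  | succ a ih =>
    rw [c3', Finset.sum_range_succ, ← c3']
    push_cast [ih, c2'_cast]; ring

lemma c4'_cast (B : ℕ) : (c4' B : ℚ) = (B+1)*(B+2)*(B+3)*(B+4)/24 := by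
  induction B with
  | zero => norm_num [c4', c3', c2']
  | succ B ih =>
    rw [c4', Finset.sum_range_succ, ← c4']
    push_cast [ih, c3'_cast]; ring

lemma Fcount_zero : Fcount 0 = 1 := by decide

lemma Fcount_succ (t : ℕ) : Fcount (t+1) = Fcount t + ∑ j ∈ range 17, c4' (16*t + j) := by
  have h : ∑ m ∈ range ((17*t+1) + 17), c4' (16*m/17)
      = ∑ m ∈ range (17*t+1), c4' (16*m/17) + ∑ j ∈ range 17, c4' (16*((17*t+1)+j)/17) := by
    rw [← Finset.sum_range_add_sum_Ico (fun m => c4' (16*m/17)) (Nat.le_add_right (17*t+1) 17),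
      Finset.sum_Ico_eq_sum_range, Nat.add_sub_cancel_left]
  have h0 : 17*(t+1)+1 = (17*t+1) + 17 := by ring
  rw [Fcount, h0, h, ← Fcount]
  exact congrArg _ (Finset.sum_congr rfl fun j hj =>
    congrArg c4' (by have := Finset.mem_range.mp hj; omega))

lemma Fcount_cast (t : ℕ) : (Fcount t : ℚ) = Reval t := by
  induction t with
  | zero => norm_num [Fcount_zero, Reval]
  | succ t ih =>
    rw [Fcount_succ]
    push_cast [ih, c4'_cast, Finset.sum_range_succ]
    rw [Reval, Reval]
    push_cast
    ring

/-- For `s = (16,16,16,16,17)`, the Ehrhart polynomial of `P_5^s` is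
`(139264/15)t⁵ + (21760/3)t⁴ + (9248/3)t³ + (2210/3)t² − (119/15)t + 1`;
its linear coefficient is negative, so `P_5^s` is not Ehrhart positive. -/
theorem ehrhart_nonpositive_a16 (L : Polynomial ℚ)
    (hL : ∀ t : ℕ, L.eval (t : ℚ) = lhCount 5 ![16, 16, 16, 16, 17] t) :
    L = Polynomial.C (139264 / 15 : ℚ) * Polynomial.X ^ 5 +
        Polynomial.C (21760 / 3 : ℚ) * Polynomial.X ^ 4 +
        Polynomial.C (9248 / 3 : ℚ) * Polynomial.X ^ 3 +
        Polynomial.C (2210 / 3 : ℚ) * Polynomial.X ^ 2 -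
        Polynomial.C (119 / 15 : ℚ) * Polynomial.X + 1 ∧
    L.coeff 1 < 0 ∧ ¬ (∀ k, 0 ≤ L.coeff k) := by
  set R : Polynomial ℚ := Polynomial.C (139264 / 15 : ℚ) * Polynomial.X ^ 5 +
        Polynomial.C (21760 / 3 : ℚ) * Polynomial.X ^ 4 +
        Polynomial.C (9248 / 3 : ℚ) * Polynomial.X ^ 3 +
        Polynomial.C (2210 / 3 : ℚ) * Polynomial.X ^ 2 -
        Polynomial.C (119 / 15 : ℚ) * Polynomial.X + 1 with hR
  have hRe : ∀ x : ℚ, R.eval x = Reval x := by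
    intro x
    simp only [hR, Reval, Polynomial.eval_add, Polynomial.eval_sub, Polynomial.eval_mul,
      Polynomial.eval_pow, Polynomial.eval_C, Polynomial.eval_X, Polynomial.eval_one]
    try ring
  have hLR : L = R := by
    apply Polynomial.eq_of_infinite_eval_eq
    apply Set.infinite_of_injective_forall_mem (f := fun t : ℕ => (t : ℚ))
      (fun a b hab => by simpa using hab)
    intro t
    show L.eval (t : ℚ) = R.eval (t : ℚ)
    rw [hL t, lhCount_eq_s12 t, hRe, Fcount_cast]
  have hc : R.coeff 1 = -(119/15 : ℚ) := by
    simp [hR, Polynomial.coeff_add, Polynomial.coeff_sub, Polynomial.coeff_C_mul,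
      Polynomial.coeff_X_pow, Polynomial.coeff_one, Polynomial.coeff_X]
  refine ⟨hLR, ?_, ?_⟩
  · rw [hLR, hc]; norm_num
  · intro h
    have := h 1
    rw [hLR, hc] at this
    norm_num at this
end

section
/- Let s = (s_1,...,s_{n-1},s_n) and s' = (s_1,...,s_{n-1},s_n+1) be sequences of positive integers. Then P_n^{s'} = conv((P_n^s + e_n) ∪ {0}), i.e., P_n^{s'} is the one-point extension of the translate P_n^s + e_n by the origin. -/
open Finset

lemma lectureHall_convex (n : ℕ) (s : Fin n → ℕ) : Convex ℝ (lectureHall n s) := by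
  intro x hx y hy a b ha hb hab
  obtain ⟨hx1, hx2⟩ := hx
  obtain ⟨hy1, hy2⟩ := hy
  have comb : ∀ i : Fin n, (a • x + b • y) i / (s i : ℝ)
      = a * (x i / (s i : ℝ)) + b * (y i / (s i : ℝ)) := by
    intro i
    simp only [Pi.add_apply, Pi.smul_apply, smul_eq_mul, add_div, mul_div_assoc]
  constructor
  · intro i
    rw [comb]
    obtain ⟨h1, h2⟩ := hx1 i
    obtain ⟨h3, h4⟩ := hy1 i
    constructor
    · nlinarith
    · nlinarith
  · intro i j hij
    rw [comb, comb]
    have h1 := hx2 i j hij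
    have h2 := hy2 i j hij
    nlinarith

/-- For `s = (s_1,…,s_{n-1},s_n)` and `s' = (s_1,…,s_{n-1},s_n+1)`, the simplex
`P_n^{s'}` is the one-point extension `conv((P_n^s + e_n) ∪ {0})` of the translate
`P_n^s + e_n` by the origin. -/
theorem lectureHall_one_point_extension (n : ℕ) (hn : 1 ≤ n) (s : Fin n → ℕ)
    (hs : ∀ i, 0 < s i) :
    lectureHall n (fun i => if (i : ℕ) = n - 1 then s i + 1 else s i) =
      convexHull ℝ
        (((fun x : Fin n → ℝ => x + fun j : Fin n => if (j : ℕ) = n - 1 then (1 : ℝ) else 0) ''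
            lectureHall n s) ∪ {0}) := by
  have hspos : ∀ i, (0:ℝ) < (s i : ℝ) := fun i => by exact_mod_cast hs i
  set e : Fin n → ℝ := fun j : Fin n => if (j : ℕ) = n - 1 then (1:ℝ) else 0 with he
  set s' : Fin n → ℕ := fun i => if (i : ℕ) = n - 1 then s i + 1 else s i with hs'
  have hcast : ∀ i : Fin n, ((s' i : ℕ) : ℝ)
      = if (i:ℕ) = n - 1 then (s i : ℝ) + 1 else (s i : ℝ) := by
    intro i; simp only [hs']; split <;> push_cast <;> ring
  have hs'pos : ∀ i, (0:ℝ) < ((s' i : ℕ) : ℝ) := by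
    intro i; rw [hcast]; split
    · linarith [hspos i]
    · exact hspos i
  have hL : n - 1 < n := by omega
  set L : Fin n := ⟨n - 1, hL⟩ with hLdef
  have hLcoe : (L : ℕ) = n - 1 := rfl
  have hle : ∀ i : Fin n, i ≤ L := by
    intro i
    rw [Fin.le_def, hLcoe]
    have := i.isLt
    omega
  apply le_antisymm
  · -- ⊆ convexHull
    intro y hy
    obtain ⟨hy1, hy2⟩ := hy
    have hsL : ((s' L : ℕ) : ℝ) = (s L : ℝ) + 1 := by
      rw [hcast, if_pos hLcoe]
    set t : ℝ := y L / ((s L : ℝ) + 1) with htdef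
    have hstL : (0:ℝ) < (s L : ℝ) + 1 := by linarith [hspos L]
    have htmem : 0 ≤ t ∧ t ≤ 1 := by
      have := hy1 L; rwa [hsL] at this
    have hyub : ∀ i, y i / ((s' i : ℕ) : ℝ) ≤ t := by
      intro i
      have := hy2 i L (hle i)
      rwa [hsL] at this
    have hylb : ∀ i, 0 ≤ y i / ((s' i : ℕ) : ℝ) := fun i => (hy1 i).1
    rcases eq_or_lt_of_le htmem.1 with h0 | htpos
    · -- t = 0, so y = 0
      have hy0 : y = 0 := by
        funext i
        have h1 := hylb i
        have h3 : y i / ((s' i : ℕ) : ℝ) = 0 := le_antisymm (h0 ▸ hyub i) h1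
        have := (div_eq_zero_iff.mp h3)
        rcases this with h | h
        · simpa using h
        · exact absurd h (ne_of_gt (hs'pos i))
      rw [hy0]
      exact subset_convexHull ℝ _ (Or.inr rfl)
    · -- t > 0
      have htne : t ≠ 0 := ne_of_gt htpos
      have hyLt : y L = t * ((s L : ℝ) + 1) := by
        rw [htdef]; field_simp
      set x : Fin n → ℝ := fun i => y i / t - e i with hxdef
      have key : ∀ i : Fin n, x i / (s i : ℝ) = (y i / ((s' i : ℕ) : ℝ)) / t := by
        intro i
        by_cases hi : (i:ℕ) = n - 1
        · have hiL : i = L := Fin.ext (by rw [hLcoe]; exact hi)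
          subst hiL
          rw [hcast, if_pos hi]
          show (y L / t - (if ((L:Fin n) : ℕ) = n - 1 then (1:ℝ) else 0)) / (s L : ℝ)
              = (y L / ((s L : ℝ) + 1)) / t
          rw [if_pos hi, hyLt]
          field_simp
          rw [add_sub_cancel_right, div_self (hspos L).ne']
        · rw [hcast, if_neg hi]
          show (y i / t - (if (i : ℕ) = n - 1 then (1:ℝ) else 0)) / (s i : ℝ)
              = (y i / (s i : ℝ)) / t
          rw [if_neg hi]
          ring
      have hxmem : x ∈ lectureHall n s := by
        constructor
        · intro i
          rw [key]
          constructor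
          · exact div_nonneg (hylb i) htpos.le
          · rw [div_le_one htpos]
            exact hyub i
        · intro i j hij
          rw [key, key]
          exact div_le_div_of_nonneg_right (hy2 i j hij) htpos.le
      have h1 : x + e ∈ ((fun x : Fin n → ℝ => x + e) '' lectureHall n s) :=
        ⟨x, hxmem, rfl⟩
      have hcc : t • (x + e) + (1 - t) • (0 : Fin n → ℝ) ∈
          convexHull ℝ (((fun x : Fin n → ℝ => x + e) '' lectureHall n s) ∪ {0}) :=
        (convex_convexHull ℝ (((fun x : Fin n → ℝ => x + e) '' lectureHall n s) ∪ {0}))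
          (subset_convexHull ℝ _ (Or.inl h1)) (subset_convexHull ℝ _ (Or.inr rfl))
          htpos.le (by linarith [htmem.2]) (by ring)
      have heq : t • (x + e) + (1 - t) • (0 : Fin n → ℝ) = y := by
        funext i
        simp only [Pi.add_apply, Pi.smul_apply, smul_eq_mul, Pi.zero_apply, mul_zero, add_zero,
          hxdef]
        field_simp
        ring
      rwa [heq] at hcc
  · -- convexHull ⊆
    apply convexHull_min _ (lectureHall_convex n s')
    rintro z (⟨x, hx, rfl⟩ | rfl)
    · obtain ⟨hx1, hx2⟩ := hx
      have hxb : ∀ i, 0 ≤ x i ∧ x i ≤ (s i : ℝ) := by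
        intro i
        obtain ⟨h1, h2⟩ := hx1 i
        constructor
        · have := mul_nonneg h1 (hspos i).le
          rwa [div_mul_cancel₀ _ (ne_of_gt (hspos i))] at this
        · exact (div_le_one (hspos i)).mp h2
      have key : ∀ i : Fin n, (x + e) i / ((s' i : ℕ) : ℝ)
          = if (i:ℕ) = n - 1 then (x i + 1) / ((s i : ℝ) + 1) else x i / (s i : ℝ) := by
        intro i
        rw [hcast]
        simp only [Pi.add_apply, he]
        split <;> simp
      constructor
      · intro i
        rw [key]
        split
        · obtain ⟨h1, h2⟩ := hxb i
          constructor
          · apply div_nonneg <;> linarith [hspos i]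
          · rw [div_le_one (by linarith [hspos i])]
            linarith
        · exact hx1 i
      · intro i j hij
        rw [key, key]
        by_cases hi : (i:ℕ) = n - 1
        · have hj : (j:ℕ) = n - 1 := by
            have h1 := Fin.le_def.mp hij
            have := j.isLt
            omega
          have : i = j := Fin.ext (by rw [hi, hj])
          subst this
          simp
        · by_cases hj : (j:ℕ) = n - 1
          · rw [if_neg hi, if_pos hj]
            have h1 := hx2 i j hij
            have h2 : x j / (s j : ℝ) ≤ (x j + 1) / ((s j : ℝ) + 1) := by
              rw [div_le_div_iff₀ (hspos j) (by linarith [hspos j])]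
              have := (hxb j).2
              nlinarith
            linarith
          · rw [if_neg hi, if_neg hj]
            exact hx2 i j hij
    · constructor
      · intro i; simp
      · intro i j hij; simp
end

section
/- For a positive integer a, constant sequence a^(n-1) = (a,...,a) of length n−1, and 0 ≤ i ≤ n−1, the i-th entry of the h*-vector of P_{n-1}^{a^(n-1)} equals the number of tuples (x_1,...,x_n) ∈ ℕ^n with 0 ≤ x_j < a for all j and x_1 + ... + x_n = ia; equivalently, it equals L_{Δ_{n,i}}(a), the number of lattice points of the a-th dilate of the hypersimplex slice Δ_{n,i} = {x ∈ [0,1]^n : x_1 + ... + x_n = i} intersected appropriately (i.e., points of a·Δ_{n,i} with strict upper bound x_j < a). -/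
open Finset Pointwise

def wc (n k : ℕ) : ℕ := (Finset.Nat.antidiagonalTuple n k).card

theorem wc_succ (n k : ℕ) : wc (n+1) k = ∑ j ∈ Finset.range (k+1), wc n (k - j) := by
  unfold wc
  rw [Finset.card_eq_sum_card_fiberwise (f := fun y => y 0) (t := Finset.range (k+1))
    (fun y hy => by
      rw [Finset.mem_coe, Finset.Nat.mem_antidiagonalTuple] at hy
      rw [Finset.mem_coe, Finset.mem_range, Nat.lt_succ_iff, ← hy]
      exact Finset.single_le_sum (fun i _ => Nat.zero_le _) (Finset.mem_univ 0))]
  refine Finset.sum_congr rfl fun j hj => ?_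
  rw [Finset.mem_range, Nat.lt_succ_iff] at hj
  refine Finset.card_bij' (fun y _ => Fin.tail y) (fun x _ => Fin.cons j x) ?_ ?_ ?_ ?_
  · intro y hy
    simp only [Finset.mem_filter, Finset.Nat.mem_antidiagonalTuple] at hy
    rw [Finset.Nat.mem_antidiagonalTuple]
    have h1 := Fin.sum_univ_succ y
    have h2 : ∑ i : Fin n, Fin.tail y i = ∑ i : Fin n, y i.succ := rfl
    rw [h2]
    omega
  · intro x hx
    rw [Finset.Nat.mem_antidiagonalTuple] at hx
    simp only [Finset.mem_filter, Finset.Nat.mem_antidiagonalTuple]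
    refine ⟨?_, by simp⟩
    rw [Fin.sum_univ_succ]
    have h2 : ∑ i : Fin n, (Fin.cons j x : Fin (n+1) → ℕ) i.succ = ∑ i : Fin n, x i := by
      simp
    rw [h2, Fin.cons_zero, hx]
    omega
  · intro y hy
    simp only [Finset.mem_filter] at hy
    have := hy.2
    conv_rhs => rw [← Fin.cons_self_tail y]
    rw [this]
  · intro x hx
    exact Fin.tail_cons (α := fun _ => ℕ) j x

theorem wc_mk_mul (n : ℕ) :
    (PowerSeries.mk fun k => (wc n k : ℚ)) * (1 - PowerSeries.X) ^ n = 1 := by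
  induction n with
  | zero =>
    have : (PowerSeries.mk fun k => (wc 0 k : ℚ)) = 1 := by
      ext k
      cases k with
      | zero => simp [wc]
      | succ k => simp [wc, PowerSeries.coeff_one]
    rw [this, pow_zero, one_mul]
  | succ n ih =>
    have key : (PowerSeries.mk fun k => (wc (n+1) k : ℚ)) =
        (PowerSeries.mk fun k => (wc n k : ℚ)) * (PowerSeries.mk 1) := by
      ext k
      rw [PowerSeries.coeff_mk, PowerSeries.coeff_mul,
        Finset.Nat.sum_antidiagonal_eq_sum_range_succ_mk]
      simp only [PowerSeries.coeff_mk, Pi.one_apply, mul_one]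
      rw [wc_succ, ← Finset.sum_range_reflect]
      push_cast
      refine Finset.sum_congr rfl fun j hj => ?_
      rw [Finset.mem_range, Nat.lt_succ_iff] at hj
      have : k - (k - j) = j := by omega
      norm_cast
      rw [this]
    rw [key, pow_succ, ← mul_assoc, mul_assoc _ (PowerSeries.mk 1),
      mul_comm (PowerSeries.mk 1), ← mul_assoc, mul_assoc,
      PowerSeries.mk_one_mul_one_sub_eq_one, mul_one, ih]

theorem wc_surj_aux (n a t : ℕ) (ha : 1 ≤ a) (y : Fin n → ℕ)
    (hy : ∑ i, y i = t * a) :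
    ∃ p ∈ (Finset.range (t+1)).sigma (fun i =>
        ((Fintype.piFinset fun _ : Fin n => Finset.range a).filter
          (fun x => ∑ j, x j = i * a)) ×ˢ Finset.Nat.antidiagonalTuple n (t - i)),
      (fun j => p.2.1 j + a * p.2.2 j) = y := by
  have hapos : 0 < a := ha
  obtain ⟨x, mm, hrec, hxa⟩ : ∃ x mm : Fin n → ℕ,
      (∀ j, x j + a * mm j = y j) ∧ (∀ j, x j < a) :=
    ⟨fun j => y j % a, fun j => y j / a, fun j => Nat.mod_add_div (y j) a,
      fun j => Nat.mod_lt _ hapos⟩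
  have hsum2 : (∑ j, x j) + a * (∑ j, mm j) = t * a := by
    rw [Finset.mul_sum, ← Finset.sum_add_distrib, ← hy]
    exact Finset.sum_congr rfl fun j _ => hrec j
  have hc1 : t * a = a * t := Nat.mul_comm t a
  have hMt : (∑ j, mm j) ≤ t := by
    refine Nat.le_of_mul_le_mul_left ?_ hapos
    omega
  refine ⟨⟨t - ∑ j, mm j, x, mm⟩, ?_, funext fun j => hrec j⟩
  simp only [Finset.mem_sigma, Finset.mem_range, Finset.mem_product, Finset.mem_filter,
    Fintype.mem_piFinset, Finset.mem_range, Finset.Nat.mem_antidiagonalTuple, Nat.lt_succ_iff]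
  have h1 : (t - ∑ j, mm j) * a + (∑ j, mm j) * a = t * a := by
    rw [← Nat.add_mul]
    congr 1
    omega
  have h2 : a * (∑ j, mm j) = (∑ j, mm j) * a := Nat.mul_comm _ _
  exact ⟨by omega, ⟨hxa, by omega⟩, by omega⟩

theorem wc_decomp (n a t : ℕ) (ha : 1 ≤ a) :
    wc n (t * a) = ∑ i ∈ Finset.range (t+1),
      ((Fintype.piFinset fun _ : Fin n => Finset.range a).filter
        (fun x => ∑ j, x j = i * a)).card * wc n (t - i) := by
  have hsum : ∑ i ∈ Finset.range (t+1),
      ((Fintype.piFinset fun _ : Fin n => Finset.range a).filter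
        (fun x => ∑ j, x j = i * a)).card * wc n (t - i) =
      ((Finset.range (t+1)).sigma (fun i =>
        ((Fintype.piFinset fun _ : Fin n => Finset.range a).filter
          (fun x => ∑ j, x j = i * a)) ×ˢ Finset.Nat.antidiagonalTuple n (t - i))).card := by
    rw [Finset.card_sigma]
    exact Finset.sum_congr rfl fun i _ => (Finset.card_product _ _).symm
  rw [hsum]
  refine (Finset.card_bij (fun p _ => fun j => p.2.1 j + a * p.2.2 j) ?_ ?_ ?_).symm
  · rintro ⟨i, x, mm⟩ hp
    simp only [Finset.mem_sigma, Finset.mem_range, Finset.mem_product, Finset.mem_filter,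
      Finset.Nat.mem_antidiagonalTuple, Nat.lt_succ_iff] at hp
    obtain ⟨hit, ⟨-, hx⟩, hmm⟩ := hp
    rw [Finset.Nat.mem_antidiagonalTuple, Finset.sum_add_distrib, hx, ← Finset.mul_sum, hmm]
    obtain ⟨d, rfl⟩ := Nat.exists_eq_add_of_le hit
    rw [Nat.add_sub_cancel_left]; ring
  · rintro ⟨i, x, mm⟩ hp ⟨i', x', mm'⟩ hp' heq
    simp only [Finset.mem_sigma, Finset.mem_range, Finset.mem_product, Finset.mem_filter,
      Fintype.mem_piFinset, Finset.mem_range,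
      Finset.Nat.mem_antidiagonalTuple, Nat.lt_succ_iff] at hp hp'
    obtain ⟨hit, ⟨hxa, hx⟩, hmm⟩ := hp
    obtain ⟨hit', ⟨hxa', hx'⟩, hmm'⟩ := hp'
    have hxeq : x = x' := by
      funext j
      have := congrFun heq j
      simp only at this
      have h1 : (x j + a * mm j) % a = x j := by
        rw [Nat.add_mul_mod_self_left, Nat.mod_eq_of_lt (hxa j)]
      have h2 : (x' j + a * mm' j) % a = x' j := by
        rw [Nat.add_mul_mod_self_left, Nat.mod_eq_of_lt (hxa' j)]
      rw [← h1, ← h2, this]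
    have hmmeq : mm = mm' := by
      funext j
      have := congrFun heq j
      simp only at this
      rw [hxeq] at this
      have := Nat.add_left_cancel this
      exact Nat.eq_of_mul_eq_mul_left ha this
    have hieq : i = i' := by
      rw [hxeq] at hx
      rw [hx] at hx'
      exact Nat.eq_of_mul_eq_mul_right ha hx'
    subst hxeq; subst hmmeq; subst hieq; rfl
  · intro y hy
    rw [Finset.Nat.mem_antidiagonalTuple] at hy
    obtain ⟨p, hp, hpe⟩ := wc_surj_aux n a t ha y hy
    exact ⟨p, hp, hpe⟩

theorem mem_dilate (m a t : ℕ) (ha : 1 ≤ a) (z : Fin m → ℤ) :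
    ((fun i => (z i : ℝ)) ∈ ((t : ℝ) • lectureHall m (fun _ => a))) ↔
      ((∀ i, 0 ≤ z i) ∧ (∀ i j : Fin m, i ≤ j → z i ≤ z j) ∧ ∀ i, z i ≤ (t * a : ℕ)) := by
  have haR : (0 : ℝ) < a := by exact_mod_cast ha
  rcases Nat.eq_zero_or_pos t with ht | ht
  · subst ht
    have hne : (lectureHall m (fun _ => a)).Nonempty := by
      refine ⟨0, ⟨fun i => ?_, fun i j _ => le_refl _⟩⟩
      simp
    rw [Nat.cast_zero, Set.zero_smul_set hne]
    constructor
    · intro hmem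
      have hz : (fun i => (z i : ℝ)) = 0 := hmem
      have : ∀ i, z i = 0 := by
        intro i
        have := congrFun hz i
        rw [Pi.zero_apply] at this
        exact_mod_cast this
      exact ⟨fun i => le_of_eq (this i).symm, fun i j _ => by rw [this i, this j],
        fun i => by rw [this i]; positivity⟩
    · rintro ⟨h0, -, hub⟩
      have : ∀ i, z i = 0 := by
        intro i
        have h1 := hub i
        have h2 := h0 i
        have h3 : ((0 * a : ℕ) : ℤ) = 0 := by simp
        omega
      show (fun i => (z i : ℝ)) ∈ (0 : Set (Fin m → ℝ))
      rw [Set.mem_zero]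
      funext i
      rw [this i]
      simp
  · have htR : (0 : ℝ) < t := by exact_mod_cast ht
    have htne : (t : ℝ) ≠ 0 := ne_of_gt htR
    rw [Set.mem_smul_set_iff_inv_smul_mem₀ htne]
    have hc : (0 : ℝ) < (t : ℝ) * a := by positivity
    have hdiv : ∀ w : ℝ, ((t : ℝ)⁻¹ • (fun i => (z i : ℝ))) =
        fun i => (z i : ℝ) / (t : ℝ) := by
      intro w
      funext i
      simp [div_eq_inv_mul]
    rw [hdiv 0]
    show ((∀ i, 0 ≤ ((z i : ℝ)/t) / (a : ℝ) ∧ ((z i : ℝ)/t) / (a : ℝ) ≤ 1) ∧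
      ∀ i j : Fin m, i ≤ j → ((z i : ℝ)/t) / (a : ℝ) ≤ ((z j : ℝ)/t) / (a : ℝ)) ↔ _
    have hred : ∀ w : ℝ, (w / t) / a = w / ((t : ℝ) * a) := fun w => by
      rw [div_div]
    simp only [hred]
    constructor
    · rintro ⟨h1, h2⟩
      refine ⟨fun i => ?_, fun i j hij => ?_, fun i => ?_⟩
      · have := (h1 i).1
        rw [le_div_iff₀ hc, zero_mul] at this
        exact_mod_cast this
      · have := h2 i j hij
        rw [div_le_div_iff_of_pos_right hc] at this
        exact_mod_cast this
      · have := (h1 i).2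
        rw [div_le_one hc] at this
        have h3 : ((z i : ℝ)) ≤ ((t * a : ℕ) : ℝ) := by push_cast; exact this
        exact_mod_cast h3
    · rintro ⟨h0, hmono, hub⟩
      refine ⟨fun i => ⟨?_, ?_⟩, fun i j hij => ?_⟩
      · rw [le_div_iff₀ hc, zero_mul]
        exact_mod_cast h0 i
      · rw [div_le_one hc]
        have := hub i
        have h3 : ((z i : ℝ)) ≤ ((t * a : ℕ) : ℝ) := by exact_mod_cast this
        push_cast at h3
        exact h3
      · rw [div_le_div_iff_of_pos_right hc]
        exact_mod_cast hmono i j hij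

def yext (m : ℕ) (y : Fin (m+1) → ℕ) : ℕ → ℤ := fun j => if h : j < m+1 then (y ⟨j, h⟩ : ℤ) else 0

def psum (m : ℕ) (y : Fin (m+1) → ℕ) : Fin m → ℤ :=
  fun i => ∑ j ∈ Finset.range ((i : ℕ)+1), yext m y j

theorem yext_nonneg (m : ℕ) (y : Fin (m+1) → ℕ) (j : ℕ) : 0 ≤ yext m y j := by
  unfold yext
  split
  · positivity
  · exact le_refl 0

theorem yext_coe (m : ℕ) (y : Fin (m+1) → ℕ) (j : Fin (m+1)) : yext m y (j : ℕ) = (y j : ℤ) := by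
  simp [yext, j.isLt]

theorem sum_yext (m : ℕ) (y : Fin (m+1) → ℕ) :
    ∑ j ∈ Finset.range (m+1), yext m y j = ((∑ j, y j : ℕ) : ℤ) := by
  rw [← Fin.sum_univ_eq_sum_range (fun j => yext m y j) (m+1), Nat.cast_sum]
  exact Finset.sum_congr rfl fun j _ => yext_coe m y j

theorem psum_injOn (m K : ℕ) :
    Set.InjOn (psum m) ↑(Finset.Nat.antidiagonalTuple (m+1) K) := by
  intro y hy y' hy' heq
  rw [Finset.mem_coe, Finset.Nat.mem_antidiagonalTuple] at hy hy'
  have hS : ∀ k, k ≤ m + 1 →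
      ∑ j ∈ Finset.range k, yext m y j = ∑ j ∈ Finset.range k, yext m y' j := by
    intro k hk
    rcases k with _ | i
    · simp
    · rcases Nat.lt_or_ge i m with hi | hi
      · exact congrFun heq ⟨i, hi⟩
      · have him : i = m := by omega
        subst him
        rw [sum_yext, sum_yext, hy, hy']
  funext j
  have h1 := hS ((j : ℕ) + 1) (by omega)
  have h2 := hS (j : ℕ) (by omega)
  rw [Finset.sum_range_succ, Finset.sum_range_succ] at h1
  rw [h2] at h1
  have h3 := add_left_cancel h1
  rw [yext_coe, yext_coe] at h3
  exact_mod_cast h3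

theorem set_eq_image (m a t : ℕ) (ha : 1 ≤ a) :
    {z : Fin m → ℤ | (∀ i, 0 ≤ z i) ∧ (∀ i j : Fin m, i ≤ j → z i ≤ z j) ∧
        ∀ i, z i ≤ ((t * a : ℕ) : ℤ)} =
      ↑((Finset.Nat.antidiagonalTuple (m+1) (t*a)).image (psum m)) := by
  ext z
  simp only [Set.mem_setOf_eq, Finset.coe_image, Set.mem_image, Finset.mem_coe,
    Finset.Nat.mem_antidiagonalTuple]
  constructor
  · rintro ⟨h0, hmono, hub⟩
    set G : ℕ → ℤ := fun j => if j = 0 then 0 else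
      if h : j - 1 < m then z ⟨j-1, h⟩ else ((t*a : ℕ) : ℤ) with hG
    have hGzero : G 0 = 0 := by simp [hG]
    have hGlast : G (m+1) = ((t*a : ℕ) : ℤ) := by simp [hG]
    have hGz : ∀ (j : ℕ) (h : j < m), G (j+1) = z ⟨j, h⟩ := by
      intro j h
      simp only [hG, Nat.add_sub_cancel, Nat.succ_ne_zero, if_false]
      rw [dif_pos h]
    have hstep : ∀ j, j ≤ m → G j ≤ G (j+1) := by
      intro j hj
      rcases j with _ | i
      · rw [hGzero]
        rcases Nat.lt_or_ge 0 m with hm | hm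
        · rw [hGz 0 hm]; exact h0 _
        · have : ¬ (0 < m) := by omega
          simp only [hG, Nat.sub_self]
          rw [if_neg (Nat.one_ne_zero), dif_neg (by omega)]
          positivity
      · have hi : i < m := by omega
        rw [hGz i hi]
        rcases Nat.lt_or_ge (i+1) m with hm | hm
        · rw [hGz (i+1) hm]
          exact hmono ⟨i, hi⟩ ⟨i+1, hm⟩ (by simp [Fin.le_def])
        · have : G (i+1+1) = ((t*a : ℕ) : ℤ) := by
            simp only [hG, Nat.add_sub_cancel, Nat.succ_ne_zero, if_false]
            rw [dif_neg (by omega)]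
          rw [this]
          exact hub _
    refine ⟨fun j => (G ((j : ℕ)+1) - G (j : ℕ)).toNat, ?_, ?_⟩
    · -- sum is t*a
      have hcast : ∀ j : Fin (m+1),
          (((G ((j : ℕ)+1) - G (j : ℕ)).toNat : ℕ) : ℤ) = G ((j : ℕ)+1) - G (j : ℕ) := by
        intro j
        exact Int.toNat_of_nonneg (sub_nonneg.mpr (hstep (j : ℕ) (by omega)))
      have : ((∑ j : Fin (m+1), (G ((j : ℕ)+1) - G (j : ℕ)).toNat : ℕ) : ℤ) = ((t*a : ℕ) : ℤ) := by
        rw [Nat.cast_sum]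
        calc ∑ j : Fin (m+1), (((G ((j : ℕ)+1) - G (j : ℕ)).toNat : ℕ) : ℤ)
            = ∑ j : Fin (m+1), (G ((j : ℕ)+1) - G (j : ℕ)) :=
              Finset.sum_congr rfl fun j _ => hcast j
          _ = ∑ j ∈ Finset.range (m+1), (G (j+1) - G j) :=
              Fin.sum_univ_eq_sum_range (fun j => G (j+1) - G j) (m+1)
          _ = G (m+1) - G 0 := Finset.sum_range_sub G (m+1)
          _ = ((t*a : ℕ) : ℤ) := by rw [hGzero, hGlast, sub_zero]
      exact_mod_cast this
    · -- psum equals z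
      funext i
      show (∑ j ∈ Finset.range ((i : ℕ)+1), yext m _ j) = z i
      have hy : ∀ j ∈ Finset.range ((i : ℕ)+1),
          yext m (fun j => (G ((j : ℕ)+1) - G (j : ℕ)).toNat) j = G (j+1) - G j := by
        intro j hj
        rw [Finset.mem_range] at hj
        have hjm : j < m + 1 := by omega
        rw [show j = ((⟨j, hjm⟩ : Fin (m+1)) : ℕ) from rfl, yext_coe]
        show ((G (j+1) - G j).toNat : ℤ) = G (j+1) - G j
        exact Int.toNat_of_nonneg (sub_nonneg.mpr (hstep j (by omega)))
      rw [Finset.sum_congr rfl hy, Finset.sum_range_sub G ((i : ℕ)+1), hGzero, sub_zero,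
        hGz (i : ℕ) i.isLt]
  · rintro ⟨y, hy, rfl⟩
    refine ⟨fun i => Finset.sum_nonneg fun j _ => yext_nonneg m y j, ?_, ?_⟩
    · intro i j hij
      exact Finset.sum_le_sum_of_subset_of_nonneg
        (Finset.range_subset_range.2 (by
          have : (i : ℕ) ≤ (j : ℕ) := hij
          omega))
        (fun k _ _ => yext_nonneg m y k)
    · intro i
      calc psum m y i ≤ ∑ j ∈ Finset.range (m+1), yext m y j :=
            Finset.sum_le_sum_of_subset_of_nonneg
              (Finset.range_subset_range.2 (by have := i.isLt; omega))
              (fun k _ _ => yext_nonneg m y k)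
        _ = ((∑ j, y j : ℕ) : ℤ) := sum_yext m y
        _ = ((t*a : ℕ) : ℤ) := by rw [hy]

theorem lh_eq_wc (m a t : ℕ) (ha : 1 ≤ a) :
    lhCount m (fun _ => a) t = wc (m+1) (t*a) := by
  unfold lhCount
  have h1 : {z : Fin m → ℤ | (fun i => (z i : ℝ)) ∈ ((t : ℝ) • lectureHall m (fun _ => a))} =
      ↑((Finset.Nat.antidiagonalTuple (m+1) (t*a)).image (psum m)) := by
    rw [← set_eq_image m a t ha]
    ext z
    rw [Set.mem_setOf_eq, Set.mem_setOf_eq]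
    exact mem_dilate m a t ha z
  rw [h1, Nat.card_coe_set_eq, Set.ncard_coe_finset,
    Finset.card_image_of_injOn (psum_injOn m (t*a))]
  rfl

theorem A_vanish (m a : ℕ) (ha : 1 ≤ a) (i : ℕ) (hi : m + 1 ≤ i) :
    ((Fintype.piFinset fun _ : Fin (m+1) => Finset.range a).filter
        (fun x => ∑ j, x j = i * a)).card = 0 := by
  rw [Finset.card_eq_zero, Finset.eq_empty_iff_forall_notMem]
  intro x hx
  simp only [Finset.mem_filter, Fintype.mem_piFinset, Finset.mem_range] at hx
  obtain ⟨hxa, hsum⟩ := hx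
  have h1 : ∑ j, x j ≤ (m+1) * (a-1) := by
    calc ∑ j, x j ≤ ∑ _j : Fin (m+1), (a-1) :=
          Finset.sum_le_sum fun j _ => by have := hxa j; omega
      _ = (m+1) * (a-1) := by rw [Finset.sum_const, Finset.card_univ, Fintype.card_fin, smul_eq_mul]
  have h2 : (m+1) * (a-1) + (m+1) * 1 = (m+1) * a := by rw [← Nat.mul_add]; congr 1; omega
  have h3 : (m+1) * a ≤ i * a := Nat.mul_le_mul_right a hi
  omega

/-- For the constant sequence `(a,…,a)` of length `n-1`, the `i`-th entry of the
`h*`-vector of `P_{n-1}^{(a,…,a)}` (defined via the Ehrhart series) equals the number of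
tuples `x ∈ {0,…,a-1}^n` with `x_1 + … + x_n = i·a`, i.e. the number of lattice points of
the `a`-th dilate of the hypersimplex slice `Δ_{n,i}` with strict upper bounds `x_j < a`. -/
theorem hstar_constant_hypersimplex (n a : ℕ) (hn : 1 ≤ n) (ha : 1 ≤ a)
    (h : ℕ → ℚ)
    (hser : (PowerSeries.mk fun t => (lhCount (n - 1) (fun _ => a) t : ℚ)) *
        (1 - PowerSeries.X) ^ n =
      ∑ i ∈ Finset.range n, PowerSeries.C (h i) * PowerSeries.X ^ i) :
    ∀ i ≤ n - 1, h i =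
      ((Fintype.piFinset fun _ : Fin n => Finset.range a).filter
        (fun x => ∑ j, x j = i * a)).card := by
  obtain ⟨m, rfl⟩ : ∃ m, n = m + 1 := ⟨n - 1, by omega⟩
  have hm1 : m + 1 - 1 = m := rfl
  rw [hm1] at hser ⊢
  set A : ℕ → ℕ := fun i => ((Fintype.piFinset fun _ : Fin (m+1) => Finset.range a).filter
      (fun x => ∑ j, x j = i * a)).card with hA
  -- Step 1: the Ehrhart series equals the wc series at multiples of a
  have hF : (PowerSeries.mk fun t => (lhCount m (fun _ => a) t : ℚ)) =
      PowerSeries.mk fun t => (wc (m+1) (t*a) : ℚ) := by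
    ext t
    rw [PowerSeries.coeff_mk, PowerSeries.coeff_mk, lh_eq_wc m a t ha]
  -- Step 2: factor out the polynomial with coefficients A i
  have hkey : (PowerSeries.mk fun t => (wc (m+1) (t*a) : ℚ)) =
      (∑ i ∈ Finset.range (m+1), PowerSeries.C (A i : ℚ) * PowerSeries.X ^ i) *
        (PowerSeries.mk fun k => (wc (m+1) k : ℚ)) := by
    ext t
    rw [PowerSeries.coeff_mk, PowerSeries.coeff_mul]
    have hcoeff : ∀ k : ℕ, (PowerSeries.coeff k)
        (∑ i ∈ Finset.range (m+1), PowerSeries.C (A i : ℚ) * PowerSeries.X ^ i) =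
        (A k : ℚ) := by
      intro k
      rw [map_sum]
      have : ∀ i ∈ Finset.range (m+1),
          (PowerSeries.coeff k) (PowerSeries.C (A i : ℚ) * PowerSeries.X ^ i) =
          if k = i then (A i : ℚ) else 0 := by
        intro i _
        rw [PowerSeries.coeff_C_mul, PowerSeries.coeff_X_pow]
        split <;> simp
      rw [Finset.sum_congr rfl this, Finset.sum_ite_eq]
      split
      · rfl
      · next hk =>
        rw [Finset.mem_range, not_lt] at hk
        have h0 : A k = 0 := A_vanish m a ha k hk
        rw [h0]
        norm_num
    have : ∀ p ∈ Finset.HasAntidiagonal.antidiagonal t, (PowerSeries.coeff p.1)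
        (∑ i ∈ Finset.range (m+1), PowerSeries.C (A i : ℚ) * PowerSeries.X ^ i) *
        (PowerSeries.coeff p.2) (PowerSeries.mk fun k => (wc (m+1) k : ℚ)) =
        (A p.1 : ℚ) * (wc (m+1) p.2 : ℚ) := by
      intro p _
      rw [hcoeff p.1, PowerSeries.coeff_mk]
    rw [Finset.sum_congr rfl this, Finset.Nat.sum_antidiagonal_eq_sum_range_succ_mk]
    rw [wc_decomp (m+1) a t ha]
    push_cast
    rfl
  rw [hF, hkey, mul_assoc, wc_mk_mul (m+1), mul_one] at hser
  -- Step 3: compare coefficients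
  intro i hi
  have hcoeffs := congrArg (PowerSeries.coeff i) hser
  have hval : ∀ (c : ℕ → ℚ), (PowerSeries.coeff i)
      (∑ j ∈ Finset.range (m+1), PowerSeries.C (c j) * PowerSeries.X ^ j) = c i := by
    intro c
    rw [map_sum]
    have : ∀ j ∈ Finset.range (m+1),
        (PowerSeries.coeff i) (PowerSeries.C (c j) * PowerSeries.X ^ j) =
        if i = j then c j else 0 := by
      intro j _
      rw [PowerSeries.coeff_C_mul, PowerSeries.coeff_X_pow]
      split <;> simp
    rw [Finset.sum_congr rfl this, Finset.sum_ite_eq, if_pos (Finset.mem_range.mpr (by omega))]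
  rw [hval (fun j => (A j : ℚ)), hval h] at hcoeffs
  rw [hcoeffs]
end
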